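/- arXiv:2507.12342 — 6 statements merged into one kernel-verified Lean document; each statement's English description precedes it below -/
import Mathlib

section
/- There is an absolute constant C such that for every integer q ≥ 3, every non-principal Dirichlet character χ modulo q, every positive integer m with gcd(m, q) = 1, and every real x ≥ 2, one has |∑_{n ≤ x, gcd(n, m) = 1} μ(n)^2 · χ(n) · f(n)| ≤ C · τ(m) · q^{1/2} · (log q) · x^{1/2} · (log x). -/
/-!
Write `μ² f = 1 ∗ h`. The kernel `h` is multiplicative with `h(p) = -1/(p+1)`,
`h(p²) = -p/(p+1)` and `h(pᵏ) = 0` for `k ≥ 3`, so `|h(d)| ≤ t²/d` where `t` is the product of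
the primes dividing `d` exactly twice. Since `d ↦ (t, d/t²)` is injective, this gives
`∑_{d ≤ N} |h(d)|/√d ≤ (∑_{t ≤ N} 1/t) (∑_u u^{-3/2}) ≪ log N`.

Swapping the order of summation turns the sum into
`∑_{d ≤ N} h(d) χ(d) ∑_{k ≤ N/d, (k,m) = 1} χ(k)`. Removing the coprimality condition by Möbius
inversion over the divisors of `m`, and using that complete sums of a non-principal character
vanish, the inner sum is at most `min(N/d, τ(m) q) ≤ √(N τ(m) q / d)`.
-/

open Finset

/-- `f(n) = ∏_{p ∣ n} (1 + 1/p)⁻¹`. -/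
noncomputable def fmul (n : ℕ) : ℝ := ∏ p ∈ n.primeFactors, ((1 : ℝ) + 1 / p)⁻¹

open ArithmeticFunction
open scoped ArithmeticFunction.Moebius ArithmeticFunction.zeta

theorem ArithmeticFunction.mul_pmul_of_map_mul {R : Type*} [CommSemiring R]
    {ψ : ArithmeticFunction R} (hψ : ∀ a b, ψ (a * b) = ψ a * ψ b) (f g : ArithmeticFunction R) :
    (f * g).pmul ψ = f.pmul ψ * g.pmul ψ := by
  ext n
  simp only [pmul_apply, mul_apply, sum_mul]
  refine sum_congr rfl fun x hx => ?_
  rw [← (Nat.mem_divisorsAntidiagonal.1 hx).1, hψ]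
  ring

theorem Nat.sum_divisors_filter_dvd_moebius {n : ℕ} (hn : n ≠ 0) (m : ℕ) :
    ∑ e ∈ n.divisors with e ∣ m, μ e = if n.Coprime m then 1 else 0 := by
  have hgcd : {e ∈ n.divisors | e ∣ m} = (n.gcd m).divisors := by
    rw [← Nat.divisors_filter_dvd_of_dvd hn (Nat.gcd_dvd_left n m)]
    exact filter_congr fun e he => by simp [Nat.dvd_gcd_iff, (Nat.mem_divisors.1 he).1]
  rw [hgcd, ← coe_mul_zeta_apply, moebius_mul_coe_zeta, one_apply]

namespace DirichletCharacter

noncomputable def toArith {q : ℕ} (χ : DirichletCharacter ℂ q) : ArithmeticFunction ℂ :=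
  toArithmeticFunction fun n => χ n

noncomputable def coprimeRestrict {q : ℕ} (χ : DirichletCharacter ℂ q) (m : ℕ) :
    ArithmeticFunction ℂ :=
  toArithmeticFunction fun n => if n.Coprime m then χ n else 0

noncomputable def coprimeSieve {q : ℕ} (χ : DirichletCharacter ℂ q) (m : ℕ) :
    ArithmeticFunction ℂ :=
  toArithmeticFunction fun e => if e ∣ m then (μ e : ℂ) * χ e else 0

variable {q : ℕ} {χ : DirichletCharacter ℂ q}

theorem sum_range_eq_zero_of_ne_one [NeZero q] (hχ : χ ≠ 1) : ∑ j ∈ range q, χ j = 0 := by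
  rw [← MulChar.sum_eq_zero_of_ne_one hχ]
  exact sum_nbij Nat.cast (by simp)
    (fun a ha b hb hab => by
      simpa [ZMod.val_cast_of_lt (mem_range.1 ha), ZMod.val_cast_of_lt (mem_range.1 hb)]
        using congrArg ZMod.val hab)
    (fun c _ => ⟨c.val, by simp [ZMod.val_lt], by simp⟩) fun _ _ => rfl

theorem sum_range_add_eq_of_ne_one [NeZero q] (hχ : χ ≠ 1) (N : ℕ) :
    ∑ j ∈ range (q + N), χ j = ∑ j ∈ range N, χ j := by
  simp [sum_range_add, sum_range_eq_zero_of_ne_one hχ]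

theorem norm_sum_range_le_of_ne_one [NeZero q] (hχ : χ ≠ 1) (N : ℕ) :
    ‖∑ j ∈ range N, χ j‖ ≤ q := by
  induction N using Nat.strong_induction_on with
  | _ N ih =>
    rcases lt_or_ge N q with hN | hN
    · calc ‖∑ j ∈ range N, χ j‖ ≤ ∑ j ∈ range N, ‖χ j‖ := norm_sum_le _ _
        _ ≤ ∑ _j ∈ range N, 1 := sum_le_sum fun j _ => χ.norm_le_one _
        _ ≤ q := by simpa using hN.le
    · obtain ⟨N, rfl⟩ := Nat.exists_eq_add_of_le hN
      rw [sum_range_add_eq_of_ne_one hχ]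
      exact ih N (by have := NeZero.pos q; omega)

theorem norm_sum_Ioc_le_of_ne_one [NeZero q] (hχ : χ ≠ 1) (N : ℕ) :
    ‖∑ j ∈ Ioc 0 N, χ j‖ ≤ q := by
  have hχ0 : χ 0 = 0 := χ.map_zero' fun hq => hχ (level_one' χ hq)
  have hrange : range (N + 1) = insert 0 (Ioc 0 N) := by ext; simp
  have := norm_sum_range_le_of_ne_one hχ (N + 1)
  rwa [hrange, sum_insert (by simp), Nat.cast_zero, hχ0, zero_add] at this

theorem toArith_apply {n : ℕ} (hn : n ≠ 0) : χ.toArith n = χ n := if_neg hn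

theorem coprimeRestrict_apply (m : ℕ) {n : ℕ} (hn : n ≠ 0) :
    χ.coprimeRestrict m n = if n.Coprime m then χ n else 0 := if_neg hn

theorem coprimeRestrict_map_mul (m a b : ℕ) :
    χ.coprimeRestrict m (a * b) = χ.coprimeRestrict m a * χ.coprimeRestrict m b := by
  rcases eq_or_ne a 0 with rfl | ha
  · simp
  rcases eq_or_ne b 0 with rfl | hb
  · simp
  simp only [coprimeRestrict_apply m (mul_ne_zero ha hb), coprimeRestrict_apply m ha,
    coprimeRestrict_apply m hb, Nat.coprime_mul_iff_left, Nat.cast_mul, map_mul]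
  split_ifs <;> simp_all

theorem coprimeSieve_mul_toArith (m : ℕ) : χ.coprimeSieve m * χ.toArith = χ.coprimeRestrict m := by
  ext n
  rcases eq_or_ne n 0 with rfl | hn
  · simp
  have hterm : ∀ e ∈ n.divisors, χ.coprimeSieve m e * χ.toArith (n / e) =
      if e ∣ m then (μ e : ℂ) * χ n else 0 := by
    intro e he
    obtain ⟨⟨k, rfl⟩, hn⟩ := Nat.mem_divisors.1 he
    rw [coprimeSieve, toArithmeticFunction, coe_mk, if_neg (left_ne_zero_of_mul hn),
      Nat.mul_div_cancel_left k (Nat.pos_of_ne_zero (left_ne_zero_of_mul hn)),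
      toArith_apply (right_ne_zero_of_mul hn)]
    split_ifs <;> simp [mul_assoc]
  have hmoebius := congrArg (Int.cast : ℤ → ℂ) (Nat.sum_divisors_filter_dvd_moebius hn m)
  push_cast at hmoebius
  rw [mul_apply, Nat.sum_divisorsAntidiagonal (fun e k => χ.coprimeSieve m e * χ.toArith k),
    sum_congr rfl hterm, ← sum_filter, ← sum_mul, coprimeRestrict_apply m hn, hmoebius]
  split_ifs <;> simp

theorem norm_coprimeRestrict_le (m n : ℕ) : ‖χ.coprimeRestrict m n‖ ≤ 1 := by
  rcases eq_or_ne n 0 with rfl | hn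
  · simp
  rw [coprimeRestrict_apply m hn]
  split_ifs
  · exact χ.norm_le_one _
  · simp

theorem norm_coprimeSieve_le (m e : ℕ) : ‖χ.coprimeSieve m e‖ ≤ if e ∣ m then 1 else 0 := by
  simp only [coprimeSieve, toArithmeticFunction, coe_mk]
  split_ifs <;> simp only [norm_zero, le_refl, zero_le_one, norm_mul]
  rw [← one_mul 1]
  refine mul_le_mul ?_ (χ.norm_le_one _) (norm_nonneg _) zero_le_one
  rw [Complex.norm_intCast, ← Int.cast_abs]
  exact_mod_cast abs_moebius_le_one

theorem norm_sum_coprimeRestrict_le (m K : ℕ) :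
    ‖∑ n ∈ Ioc 0 K, χ.coprimeRestrict m n‖ ≤ K := by
  calc ‖∑ n ∈ Ioc 0 K, χ.coprimeRestrict m n‖ ≤ ∑ _n ∈ Ioc 0 K, (1 : ℝ) :=
        (norm_sum_le _ _).trans (sum_le_sum fun n _ => norm_coprimeRestrict_le m n)
    _ = K := by simp

theorem norm_sum_coprimeRestrict_le_card_divisors_mul [NeZero q] (hχ : χ ≠ 1) {m : ℕ}
    (hm : m ≠ 0) (K : ℕ) :
    ‖∑ n ∈ Ioc 0 K, χ.coprimeRestrict m n‖ ≤ m.divisors.card * q := by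
  rw [← coprimeSieve_mul_toArith, sum_Ioc_mul_eq_sum_sum]
  have hinner (e : ℕ) : ‖∑ j ∈ Ioc 0 (K / e), χ.toArith j‖ ≤ q := by
    rw [sum_congr rfl fun j hj => toArith_apply (mem_Ioc.1 hj).1.ne']
    exact norm_sum_Ioc_le_of_ne_one hχ _
  calc ‖∑ e ∈ Ioc 0 K, χ.coprimeSieve m e * ∑ j ∈ Ioc 0 (K / e), χ.toArith j‖
      ≤ ∑ e ∈ Ioc 0 K, (if e ∣ m then 1 else 0) * (q : ℝ) := by
        refine (norm_sum_le _ _).trans (sum_le_sum fun e _ => ?_)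
        rw [norm_mul]
        exact mul_le_mul (norm_coprimeSieve_le m e) (hinner e) (norm_nonneg _) (by positivity)
    _ = #{e ∈ Ioc 0 K | e ∣ m} * q := by rw [← sum_mul, sum_boole]
    _ ≤ m.divisors.card * q := by
        gcongr
        exact fun e he => Nat.mem_divisors.2 ⟨(mem_filter.1 he).2, hm⟩

theorem norm_sum_coprimeRestrict_le_sqrt [NeZero q] (hχ : χ ≠ 1) {m : ℕ} (hm : m ≠ 0) (K : ℕ) :
    ‖∑ n ∈ Ioc 0 K, χ.coprimeRestrict m n‖ ≤ √(K * (m.divisors.card * q)) :=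
  Real.le_sqrt_of_sq_le <| by
    rw [sq]
    exact mul_le_mul (norm_sum_coprimeRestrict_le m K)
      (norm_sum_coprimeRestrict_le_card_divisors_mul hχ hm K) (norm_nonneg _) (Nat.cast_nonneg _)

end DirichletCharacter

def Nat.exactSquarePart (n : ℕ) : ℕ := ∏ p ∈ n.primeFactors, if n.factorization p = 2 then p else 1

theorem Nat.exactSquarePart_pos (n : ℕ) : 0 < n.exactSquarePart :=
  prod_pos fun p hp => by
    split_ifs
    · exact (Nat.prime_of_mem_primeFactors hp).pos
    · exact Nat.one_pos

theorem Nat.exactSquarePart_sq_dvd (n : ℕ) : n.exactSquarePart ^ 2 ∣ n := by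
  rcases eq_or_ne n 0 with rfl | hn
  · exact dvd_zero _
  conv_rhs => rw [← Nat.prod_factorization_pow_eq_self hn]
  rw [exactSquarePart, ← prod_pow, Finsupp.prod, Nat.support_factorization]
  refine prod_dvd_prod_of_dvd _ _ fun p _ => ?_
  split_ifs with h
  · rw [h]
  · simp

namespace Fmul

noncomputable def arith : ArithmeticFunction ℝ := toArithmeticFunction fmul

noncomputable def sqfree : ArithmeticFunction ℝ := ((μ : ArithmeticFunction ℝ).pmul μ).pmul arith

noncomputable def kernel : ArithmeticFunction ℝ := μ * sqfree

theorem arith_apply {n : ℕ} (hn : n ≠ 0) : arith n = fmul n := if_neg hn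

theorem sqfree_apply (n : ℕ) : sqfree n = (μ n : ℝ) ^ 2 * arith n := by
  simp [sqfree, sq]

theorem isMultiplicative_arith : arith.IsMultiplicative := by
  refine IsMultiplicative.iff_ne_zero.2 ⟨by simp [arith_apply, fmul], fun {m n} hm hn hmn => ?_⟩
  rw [arith_apply hm, arith_apply hn, arith_apply (mul_ne_zero hm hn), fmul, fmul, fmul,
    Nat.primeFactors_mul hm hn, prod_union hmn.disjoint_primeFactors]

theorem isMultiplicative_sqfree : sqfree.IsMultiplicative :=
  (isMultiplicative_moebius.intCast.pmul isMultiplicative_moebius.intCast).pmul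
    isMultiplicative_arith

theorem isMultiplicative_kernel : kernel.IsMultiplicative :=
  isMultiplicative_moebius.intCast.mul isMultiplicative_sqfree

theorem kernel_mul_zeta : kernel * ζ = sqfree := by
  rw [kernel, mul_comm, ← mul_assoc, coe_zeta_mul_coe_moebius, one_mul]

theorem arith_prime {p : ℕ} (hp : p.Prime) : arith p = p / (p + 1) := by
  have : (p : ℝ) ≠ 0 := by exact_mod_cast hp.ne_zero
  rw [arith_apply hp.ne_zero, fmul, hp.primeFactors, prod_singleton]
  field_simp

theorem sqfree_prime_pow {p : ℕ} (hp : p.Prime) (k : ℕ) :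
    sqfree (p ^ k) = if k = 0 then 1 else if k = 1 then arith p else 0 := by
  rcases k with _ | _ | k
  · simp [isMultiplicative_sqfree.map_one]
  · simp [sqfree_apply, moebius_apply_prime hp]
  · simp [sqfree_apply, moebius_apply_prime_pow hp]

theorem kernel_prime_pow_succ {p : ℕ} (hp : p.Prime) (k : ℕ) :
    kernel (p ^ (k + 1)) = sqfree (p ^ (k + 1)) - sqfree (p ^ k) := by
  have hsum (k : ℕ) : sqfree (p ^ k) = ∑ i ∈ range (k + 1), kernel (p ^ i) := by
    rw [← kernel_mul_zeta, coe_mul_zeta_apply, Nat.sum_divisors_prime_pow hp]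
  rw [hsum, hsum, sum_range_succ]
  ring

theorem abs_kernel_prime_pow_mul_le {p : ℕ} (hp : p.Prime) (k : ℕ) :
    |kernel (p ^ k)| * p ^ k ≤ if k = 2 then (p : ℝ) ^ 2 else 1 := by
  have hp0 : (0 : ℝ) < p := by exact_mod_cast hp.pos
  rcases k with _ | _ | _ | k
  · simp [isMultiplicative_kernel.map_one]
  · rw [kernel_prime_pow_succ hp, sqfree_prime_pow hp, sqfree_prime_pow hp, arith_prime hp]
    simp only [zero_add, one_ne_zero, ↓reduceIte, pow_one, OfNat.one_ne_ofNat]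
    rw [show (p : ℝ) / (p + 1) - 1 = -((p : ℝ) + 1)⁻¹ by field_simp; ring, abs_neg,
      abs_of_pos (by positivity), inv_mul_le_one₀ (by positivity)]
    linarith
  · rw [kernel_prime_pow_succ hp, sqfree_prime_pow hp, sqfree_prime_pow hp, arith_prime hp]
    simp only [Nat.reduceAdd, OfNat.ofNat_ne_zero, ↓reduceIte, OfNat.ofNat_ne_one, zero_sub,
      abs_neg]
    rw [abs_of_pos (by positivity)]
    exact mul_le_of_le_one_left (by positivity) ((div_le_one (by positivity)).2 (by linarith))
  · rw [kernel_prime_pow_succ hp, sqfree_prime_pow hp, sqfree_prime_pow hp]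
    simp only [show k + 3 ≠ 0 by omega, show k + 3 ≠ 1 by omega, show k + 2 ≠ 0 by omega,
      show k + 2 ≠ 1 by omega, show k + 3 ≠ 2 by omega, if_false]
    simp

theorem abs_kernel_mul_le {n : ℕ} (hn : n ≠ 0) :
    |kernel n| * n ≤ (n.exactSquarePart : ℝ) ^ 2 := by
  have hprod : |kernel n| * n =
      n.factorization.prod fun p k => |kernel (p ^ k)| * (p : ℝ) ^ k := by
    have hcast : (n : ℝ) = n.factorization.prod fun p k => (p : ℝ) ^ k := by
      rw [Finsupp.prod]
      exact_mod_cast (Nat.prod_factorization_pow_eq_self hn).symm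
    rw [isMultiplicative_kernel.multiplicative_factorization kernel hn, hcast, Finsupp.prod,
      Finsupp.prod, Finsupp.prod, abs_prod, prod_mul_distrib]
  rw [hprod, Nat.exactSquarePart, Finsupp.prod, Nat.support_factorization, Nat.cast_prod,
    ← prod_pow]
  refine prod_le_prod (fun p _ => by positivity) fun p hp => ?_
  have := abs_kernel_prime_pow_mul_le (Nat.prime_of_mem_primeFactors hp) (n.factorization p)
  split_ifs at this ⊢ <;> simpa using this

theorem abs_kernel_div_sqrt_le {d : ℕ} (hd : d ≠ 0) :
    |kernel d| / √d ≤
      (d.exactSquarePart : ℝ)⁻¹ * (((d / d.exactSquarePart ^ 2 : ℕ) : ℝ) ^ (3 / 2 : ℝ))⁻¹ := by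
  set t := d.exactSquarePart
  set u := d / t ^ 2
  have hdtu : (d : ℝ) = t ^ 2 * u := by
    exact_mod_cast (Nat.mul_div_cancel' (Nat.exactSquarePart_sq_dvd d)).symm
  have ht : (0 : ℝ) < t := by exact_mod_cast Nat.exactSquarePart_pos d
  have hu : (0 : ℝ) < u := by
    have : (0 : ℝ) < d := by exact_mod_cast Nat.pos_of_ne_zero hd
    nlinarith
  have hsqrt : √(d : ℝ) = t * √u := by
    rw [hdtu, Real.sqrt_mul (by positivity), Real.sqrt_sq ht.le]
  have hrpow : (u : ℝ) ^ (3 / 2 : ℝ) = u * √u := by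
    rw [Real.sqrt_eq_rpow, ← Real.rpow_one_add' hu.le (by norm_num)]
    norm_num
  have hkernel : |kernel d| ≤ (u : ℝ)⁻¹ := by
    have h := abs_kernel_mul_le hd
    rw [hdtu, mul_left_comm] at h
    rw [← one_div, le_div_iff₀ hu]
    exact le_of_mul_le_mul_left (by simpa using h) (by positivity)
  rw [hsqrt, hrpow, div_le_iff₀ (by positivity)]
  calc |kernel d| ≤ (u : ℝ)⁻¹ := hkernel
    _ = _ := by field_simp

theorem sum_abs_kernel_div_sqrt_le (N : ℕ) :
    ∑ d ∈ Ioc 0 N, |kernel d| / √d ≤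
      (1 + Real.log N) * ∑' u : ℕ, ((u : ℝ) ^ (3 / 2 : ℝ))⁻¹ := by
  set w : ℕ × ℕ → ℝ := fun x => (x.1 : ℝ)⁻¹ * ((x.2 : ℝ) ^ (3 / 2 : ℝ))⁻¹
  set e : ℕ → ℕ × ℕ := fun d => (d.exactSquarePart, d / d.exactSquarePart ^ 2)
  have he : e.Injective := fun a b hab => by
    rw [← Nat.mul_div_cancel' a.exactSquarePart_sq_dvd,
      ← Nat.mul_div_cancel' b.exactSquarePart_sq_dvd]
    simp only [e, Prod.ext_iff] at hab
    rw [hab.2, hab.1]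
  have hmaps : ∀ d ∈ Ioc 0 N, e d ∈ Ioc 0 N ×ˢ Ioc 0 N := fun d hd => by
    obtain ⟨hd0, hdN⟩ := mem_Ioc.1 hd
    have hle : d.exactSquarePart ^ 2 ≤ d := Nat.le_of_dvd hd0 d.exactSquarePart_sq_dvd
    simp only [e, mem_product, mem_Ioc]
    refine ⟨⟨d.exactSquarePart_pos, ?_⟩, Nat.div_pos hle (pow_pos d.exactSquarePart_pos 2),
      (Nat.div_le_self _ _).trans hdN⟩
    nlinarith [d.exactSquarePart_pos]
  have hharmonic : ∑ t ∈ Ioc 0 N, (t : ℝ)⁻¹ ≤ 1 + Real.log N := by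
    have := harmonic_le_one_add_log N
    rw [harmonic_eq_sum_Icc, Rat.cast_sum] at this
    rw [← Finset.Icc_add_one_left_eq_Ioc, zero_add]
    simpa using this
  have hsummable : Summable fun u : ℕ => ((u : ℝ) ^ (3 / 2 : ℝ))⁻¹ :=
    Real.summable_nat_rpow_inv.2 (by norm_num)
  calc ∑ d ∈ Ioc 0 N, |kernel d| / √d ≤ ∑ d ∈ Ioc 0 N, w (e d) :=
        sum_le_sum fun d hd => abs_kernel_div_sqrt_le (mem_Ioc.1 hd).1.ne'
    _ = ∑ x ∈ (Ioc 0 N).image e, w x := (sum_image fun a _ b _ hab => he hab).symm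
    _ ≤ ∑ x ∈ Ioc 0 N ×ˢ Ioc 0 N, w x :=
        sum_le_sum_of_subset_of_nonneg (image_subset_iff.2 hmaps) fun _ _ _ => by positivity
    _ = (∑ t ∈ Ioc 0 N, (t : ℝ)⁻¹) * ∑ u ∈ Ioc 0 N, ((u : ℝ) ^ (3 / 2 : ℝ))⁻¹ := by
        rw [sum_product, sum_mul_sum]
    _ ≤ (1 + Real.log N) * ∑' u : ℕ, ((u : ℝ) ^ (3 / 2 : ℝ))⁻¹ :=
        mul_le_mul hharmonic (hsummable.sum_le_tsum _ fun _ _ => by positivity)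
          (sum_nonneg fun _ _ => by positivity) (by positivity)

variable {q : ℕ} {χ : DirichletCharacter ℂ q}

theorem sum_coprime_eq_sum_kernel_mul (m N : ℕ) :
    ∑ n ∈ Icc 1 N with n.Coprime m, ((μ n : ℤ) : ℂ) ^ 2 * χ n * (fmul n : ℂ) =
      ∑ d ∈ Ioc 0 N, (kernel d : ℂ) * χ.coprimeRestrict m d *
        ∑ k ∈ Ioc 0 (N / d), χ.coprimeRestrict m k := by
  set ψ := χ.coprimeRestrict m
  set kernelC : ArithmeticFunction ℂ := toArithmeticFunction fun n => (kernel n : ℂ)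
  have hkernelC (d : ℕ) : kernelC d = kernel d := by
    rcases eq_or_ne d 0 with rfl | hd
    · simp
    · exact if_neg hd
  have hterm : ∀ n ∈ Ioc 0 N,
      (if n.Coprime m then ((μ n : ℤ) : ℂ) ^ 2 * χ n * (fmul n : ℂ) else 0) =
        ((kernelC * ζ).pmul ψ) n := by
    intro n hn
    have hn0 : n ≠ 0 := (mem_Ioc.1 hn).1.ne'
    have hsqfree : ∑ d ∈ n.divisors, kernelC d = (sqfree n : ℂ) := by
      simp only [hkernelC, ← kernel_mul_zeta, coe_mul_zeta_apply, Complex.ofReal_sum]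
    rw [pmul_apply, coe_mul_zeta_apply, hsqfree, sqfree_apply, arith_apply hn0,
      DirichletCharacter.coprimeRestrict_apply m hn0]
    push_cast
    split_ifs <;> ring
  calc _ = ∑ n ∈ Ioc 0 N, ((kernelC * ζ).pmul ψ) n := by
        rw [sum_filter, ← Finset.Icc_add_one_left_eq_Ioc, zero_add]
        exact sum_congr rfl hterm
    _ = _ := by
        rw [mul_pmul_of_map_mul (χ.coprimeRestrict_map_mul m), zeta_pmul, sum_Ioc_mul_eq_sum_sum]
        exact sum_congr rfl fun d _ => by rw [pmul_apply, hkernelC]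

theorem norm_sum_coprime_le [NeZero q] (hχ : χ ≠ 1) {m : ℕ} (hm : m ≠ 0) {x : ℝ} (hx : 0 ≤ x) :
    ‖∑ n ∈ Icc 1 ⌊x⌋₊ with n.Coprime m, ((μ n : ℤ) : ℂ) ^ 2 * χ n * (fmul n : ℂ)‖ ≤
      √(m.divisors.card * q) * √x *
        ((1 + Real.log ⌊x⌋₊) * ∑' u : ℕ, ((u : ℝ) ^ (3 / 2 : ℝ))⁻¹) := by
  set N := ⌊x⌋₊
  set B : ℝ := m.divisors.card * q
  have hinner (d : ℕ) (hd : d ∈ Ioc 0 N) :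
      ‖∑ k ∈ Ioc 0 (N / d), χ.coprimeRestrict m k‖ ≤ √x / √d * √B := by
    have hd0 : (0 : ℝ) < d := by exact_mod_cast (mem_Ioc.1 hd).1
    have hNd : ((N / d : ℕ) : ℝ) ≤ x / d :=
      Nat.cast_div_le.trans (div_le_div_of_nonneg_right (Nat.floor_le hx) hd0.le)
    calc _ ≤ √((N / d : ℕ) * B) := χ.norm_sum_coprimeRestrict_le_sqrt hχ hm _
      _ ≤ √(x / d * B) := Real.sqrt_le_sqrt (by gcongr)
      _ = √x / √d * √B := by rw [Real.sqrt_mul' _ (by positivity), Real.sqrt_div' _ hd0.le]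
  rw [sum_coprime_eq_sum_kernel_mul]
  calc _ ≤ ∑ d ∈ Ioc 0 N, |kernel d| * (√x / √d * √B) := by
        refine (norm_sum_le _ _).trans (sum_le_sum fun d hd => ?_)
        rw [norm_mul, norm_mul, Complex.norm_real, Real.norm_eq_abs]
        exact mul_le_mul (mul_le_of_le_one_right (abs_nonneg _) (χ.norm_coprimeRestrict_le m d))
          (hinner d hd) (norm_nonneg _) (abs_nonneg _)
    _ = √B * √x * ∑ d ∈ Ioc 0 N, |kernel d| / √d := by
        rw [mul_sum]
        exact sum_congr rfl fun d _ => by ring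
    _ ≤ _ := by gcongr; exact sum_abs_kernel_div_sqrt_le N

end Fmul

theorem Real.one_le_log_of_three_le {x : ℝ} (hx : 3 ≤ x) : 1 ≤ Real.log x := by
  rw [Real.le_log_iff_exp_le (by positivity)]
  exact Real.exp_one_lt_d9.le.trans ((by norm_num : (2.7182818286 : ℝ) ≤ 3).trans hx)

theorem Real.one_add_log_floor_le {x : ℝ} (hx : 2 ≤ x) : 1 + Real.log ⌊x⌋₊ ≤ 3 * Real.log x := by
  have hfloor : (0 : ℝ) < ⌊x⌋₊ := by exact_mod_cast Nat.floor_pos.2 (by linarith)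
  have := Real.log_le_log hfloor (Nat.floor_le (by linarith))
  have := Real.log_le_log (by norm_num) hx
  linarith [Real.log_two_gt_d9]

theorem Real.sqrt_mul_le_mul_sqrt {a b : ℝ} (ha : 1 ≤ a) : √(a * b) ≤ a * √b := by
  rw [Real.sqrt_mul (by linarith)]
  gcongr
  exact Real.sqrt_le_left (by linarith) |>.2 (by nlinarith)

theorem character_sum_nonprincipal :
    ∃ C : ℝ, 0 < C ∧
      ∀ (q : ℕ), 3 ≤ q → ∀ (χ : DirichletCharacter ℂ q), χ ≠ 1 →
        ∀ (m : ℕ), 0 < m → Nat.Coprime m q →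
        ∀ (x : ℝ), 2 ≤ x →
        ‖∑ n ∈ (Finset.Icc 1 ⌊x⌋₊).filter fun n => Nat.Coprime n m,
            ((ArithmeticFunction.moebius n : ℤ) : ℂ) ^ 2 * χ (n : ZMod q) * (fmul n : ℂ)‖ ≤
          C * (m.divisors.card : ℝ) * Real.sqrt q * Real.log q * Real.sqrt x * Real.log x := by
  set C₀ := ∑' u : ℕ, ((u : ℝ) ^ (3 / 2 : ℝ))⁻¹
  have hC₀ : 0 < C₀ :=
    (Real.summable_nat_rpow_inv.2 (by norm_num)).tsum_pos (fun _ => by positivity) 1 (by norm_num)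
  refine ⟨3 * C₀, by positivity, fun q hq χ hχ m hm _ x hx => ?_⟩
  have : NeZero q := ⟨by omega⟩
  have hτ : 1 ≤ (m.divisors.card : ℝ) :=
    Nat.one_le_cast.2 (card_pos.2 ⟨1, Nat.one_mem_divisors.2 hm.ne'⟩)
  have hlogx : 0 ≤ Real.log x := Real.log_nonneg (by linarith)
  calc _ ≤ √(m.divisors.card * q) * √x * ((1 + Real.log ⌊x⌋₊) * C₀) :=
        Fmul.norm_sum_coprime_le hχ hm.ne' (by linarith)
    _ ≤ m.divisors.card * √q * √x * (3 * Real.log x * C₀) := by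
        gcongr
        exacts [Real.sqrt_mul_le_mul_sqrt hτ, Real.one_add_log_floor_le hx]
    _ ≤ m.divisors.card * √q * √x * (3 * Real.log x * C₀) * Real.log q :=
        le_mul_of_one_le_right (by positivity) (Real.one_le_log_of_three_le (by exact_mod_cast hq))
    _ = _ := by ring
end

section
/- Let m1, m2, m3 be nonzero integers with m1 > 0 and |m1·m2·m3| squarefree. Then (m1, m2, m3) is ℚ-soluble if and only if all of the following hold: (i) for every odd prime p dividing m1, the Legendre symbol (−m2·m3 / p) equals 1; (ii) for every odd prime p dividing m2, the Legendre symbol (m1·m3 / p) equals 1; (iii) for every odd prime p dividing m3, the Legendre symbol (m1·m2 / p) equals 1; (iv) m2 and m3 are not both negative; (v) (m1, m2, m3) is ℚ₂-soluble, where ℚ₂ is the field of 2-adic numbers. -/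
/-!
Substituting `x = m₁X` turns the conic into the diagonal form `m₁X² - m₂Y² - m₃Z² = 0`, so the
statement is Legendre's theorem for `aX² + bY² + cZ² = 0` with `abc` squarefree.

Necessity: reducing a primitive integer zero modulo a prime `p ∣ a` gives `bY² + cZ² ≡ 0` with
`p ∤ Z`, so `-bc` is a square modulo `p`.

Sufficiency: modulo each prime `p ∣ abc` the local conditions split the form into linear factors,
so one linear form per prime cuts out zeros of the form modulo `p`. Pigeonholing the box
`|X| ≤ √|bc|, |Y| ≤ √|ca|, |Z| ≤ √|ab|` (more than `|abc|` points) against these forms gives a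
nonzero vector on which the form equals `k·abc`. After normalising the signs to `a, b > 0 > c`,
`-2 ≤ k ≤ 1`; the values `k = -2` and `k = 1` make a square such as `z² = ab` divide the
squarefree `abc` and so force `a = b = 1`, and `k = -1` is repaired by a composition identity.
The case `a = b = 1`, where the box always contains `(0, 0, 1)`, is the two-squares theorem.

By Hilbert reciprocity, ℚ₂-solubility (v) is a consequence of (i)–(iv); it enters the proof only
through `ℚ ⊆ ℚ₂`.
-/

/-- The conic `x² = m₁m₂ y² + m₁m₃ z²` has a nontrivial solution over `F`. -/
def Soluble (F : Type*) [Field F] (m1 m2 m3 : ℤ) : Prop :=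
  ∃ x y z : F, ¬(x = 0 ∧ y = 0 ∧ z = 0) ∧
    x ^ 2 = ((m1 * m2 : ℤ) : F) * y ^ 2 + ((m1 * m3 : ℤ) : F) * z ^ 2

theorem Squarefree.not_dvd_right_of_dvd_left {R : Type*} [CommMonoidWithZero R] {m n p : R}
    (h : Squarefree (m * n)) (hp : Prime p) (hm : p ∣ m) : ¬p ∣ n :=
  fun hn => hp.not_isUnit (h p (mul_dvd_mul hm hn))

theorem Int.squarefree_neg {n : ℤ} : Squarefree (-n) ↔ Squarefree n := by
  simp only [← Int.squarefree_natAbs, Int.natAbs_neg]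

theorem Nat.lt_mul_sqrt_succ_of_sq_eq {n r s t : ℕ} (h : n ^ 2 = r * s * t) :
    n < (r.sqrt + 1) * (s.sqrt + 1) * (t.sqrt + 1) := by
  refine lt_of_pow_lt_pow_left₀ 2 (Nat.zero_le _) ?_
  rw [h, mul_pow, mul_pow]
  exact Nat.mul_lt_mul'' (Nat.mul_lt_mul'' r.lt_succ_sqrt' s.lt_succ_sqrt') t.lt_succ_sqrt'

theorem Int.sq_le_of_abs_le_sqrt {x : ℤ} {n : ℕ} (h : |x| ≤ n.sqrt) : x ^ 2 ≤ n := by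
  calc x ^ 2 = |x| ^ 2 := (sq_abs x).symm
    _ ≤ (n.sqrt : ℤ) ^ 2 := by gcongr
    _ ≤ n := by exact_mod_cast n.sqrt_le'

theorem Int.dvd_of_squarefree_of_forall_prime_dvd {n m : ℤ} (hn : Squarefree n)
    (h : ∀ p ∈ n.natAbs.primeFactors, (p : ℤ) ∣ m) : n ∣ m := by
  rw [← Int.natAbs_dvd_natAbs,
    ← Nat.prod_primeFactors_of_squarefree (Int.squarefree_natAbs.mpr hn)]
  exact Finset.prod_primes_dvd _ (fun p hp => (Nat.prime_of_mem_primeFactors hp).prime)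
    fun p hp => Int.natCast_dvd.mp (h p hp)

theorem Nat.card_pi_zmod_primeFactors {n : ℕ} (hn : Squarefree n) :
    Nat.card (∀ p : n.primeFactors, ZMod p) = n := by
  rw [Nat.card_pi]
  simp only [Nat.card_zmod]
  rw [Finset.prod_coe_sort n.primeFactors (fun p => p), Nat.prod_primeFactors_of_squarefree hn]

theorem exists_ne_zero_map_eq_zero_of_card_lt {G : Type*} [AddCommGroup G] [Finite G]
    (f : ℤ × ℤ × ℤ →+ G) {X Y Z : ℕ} (h : Nat.card G < (X + 1) * (Y + 1) * (Z + 1)) :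
    ∃ x y z : ℤ, ¬(x = 0 ∧ y = 0 ∧ z = 0) ∧ f (x, y, z) = 0 ∧ |x| ≤ X ∧ |y| ≤ Y ∧ |z| ≤ Z := by
  let g (i : Fin (X + 1) × Fin (Y + 1) × Fin (Z + 1)) : G := f (i.1, i.2.1, i.2.2)
  obtain ⟨i, j, hij, hg⟩ : ∃ i j, i ≠ j ∧ g i = g j := by
    by_contra! hg
    have := Nat.card_le_card_of_injective g fun i j hij => by_contra fun hne => hg i j hne hij
    simp only [Nat.card_eq_fintype_card, Fintype.card_prod, Fintype.card_fin, ← mul_assoc] at this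
    omega
  refine ⟨i.1 - j.1, i.2.1 - j.2.1, i.2.2 - j.2.2, fun ⟨h₁, h₂, h₃⟩ => hij ?_, ?_,
    abs_sub_le_iff.mpr ⟨by omega, by omega⟩, abs_sub_le_iff.mpr ⟨by omega, by omega⟩,
    abs_sub_le_iff.mpr ⟨by omega, by omega⟩⟩
  · ext <;> omega
  · rw [← sub_eq_zero.mpr hg, ← map_sub]
    rfl

def IsSquareModPrimeDivisors (n d : ℤ) : Prop :=
  ∀ p : ℕ, p.Prime → (p : ℤ) ∣ d → IsSquare (n : ZMod p)

def LegendreConditions (a b c : ℤ) : Prop :=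
  IsSquareModPrimeDivisors (-(b * c)) a ∧ IsSquareModPrimeDivisors (-(c * a)) b ∧
    IsSquareModPrimeDivisors (-(a * b)) c

def DiagIsotropic (R : Type*) [CommRing R] (a b c : ℤ) : Prop :=
  ∃ x y z : R, ¬(x = 0 ∧ y = 0 ∧ z = 0) ∧ (a : R) * x ^ 2 + (b : R) * y ^ 2 + (c : R) * z ^ 2 = 0

section Fields

variable {F : Type*} [Field F]

theorem exists_linear_factor_of_isSquare {b c : F} (hb : b ≠ 0) (h : IsSquare (-(b * c))) :
    ∃ β γ : F, ∀ y z : F, β * y + γ * z = 0 → b * y ^ 2 + c * z ^ 2 = 0 := by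
  obtain ⟨r, hr⟩ := h
  refine ⟨b, r, fun y z hyz => ?_⟩
  have : b * (b * y ^ 2 + c * z ^ 2) = 0 := by
    linear_combination (b * y - r * z) * hyz - z ^ 2 * hr
  exact (mul_eq_zero.mp this).resolve_left hb

theorem isSquare_neg_mul_of_add_sq_eq_zero {b c y z : F} (hz : z ≠ 0)
    (h : b * y ^ 2 + c * z ^ 2 = 0) : IsSquare (-(b * c)) :=
  ⟨b * y / z, by field_simp; linear_combination -b * h⟩

theorem soluble_iff_diagIsotropic {m1 m2 m3 : ℤ} (hm1 : (m1 : F) ≠ 0) :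
    Soluble F m1 m2 m3 ↔ DiagIsotropic F m1 (-m2) (-m3) := by
  constructor
  · rintro ⟨x, y, z, hne, h⟩
    refine ⟨x / m1, y, z, fun ⟨hx, hy, hz⟩ => hne ⟨by simpa [hm1] using hx, hy, hz⟩, ?_⟩
    push_cast at h ⊢
    field_simp
    linear_combination h
  · rintro ⟨x, y, z, hne, h⟩
    refine ⟨m1 * x, y, z, fun ⟨hx, hy, hz⟩ => hne ⟨by simpa [hm1] using hx, hy, hz⟩, ?_⟩
    push_cast at h ⊢
    linear_combination m1 * h

theorem Soluble.map {K : Type*} [Field K] {m1 m2 m3 : ℤ} (f : F →+* K)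
    (h : Soluble F m1 m2 m3) : Soluble K m1 m2 m3 := by
  obtain ⟨x, y, z, hne, h⟩ := h
  exact ⟨f x, f y, f z, by simpa using hne, by simpa using congrArg f h⟩

end Fields

theorem jacobiSym_eq_one_iff_isSquare {n : ℤ} {p : ℕ} (hp : p.Prime) (hn : ¬(p : ℤ) ∣ n) :
    jacobiSym n p = 1 ↔ IsSquare (n : ZMod p) := by
  have := Fact.mk hp
  rw [← jacobiSym.legendreSym.to_jacobiSym]
  exact legendreSym.eq_one_iff p (by rwa [Ne, ZMod.intCast_zmod_eq_zero_iff_dvd])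

theorem isSquareModPrimeDivisors_iff_jacobiSym {n d : ℤ} (hsf : Squarefree (d * n)) :
    IsSquareModPrimeDivisors n d ↔
      ∀ p : ℕ, p.Prime → p ≠ 2 → (p : ℤ) ∣ d → jacobiSym n p = 1 := by
  have hn {p : ℕ} (hp : p.Prime) (hpd : (p : ℤ) ∣ d) : ¬(p : ℤ) ∣ n :=
    hsf.not_dvd_right_of_dvd_left (Nat.prime_iff_prime_int.mp hp) hpd
  refine ⟨fun h p hp _ hpd => (jacobiSym_eq_one_iff_isSquare hp (hn hp hpd)).mpr (h p hp hpd),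
    fun h p hp hpd => ?_⟩
  obtain rfl | hp2 := eq_or_ne p 2
  · exact (by decide : ∀ x : ZMod 2, IsSquare x) _
  · exact (jacobiSym_eq_one_iff_isSquare hp (hn hp hpd)).mp (h p hp hp2 hpd)

theorem isSquareModPrimeDivisors_neg_right {n d : ℤ} :
    IsSquareModPrimeDivisors n (-d) ↔ IsSquareModPrimeDivisors n d := by
  simp only [IsSquareModPrimeDivisors, dvd_neg]

theorem Int.exists_sq_add_sq_of_squarefree {n : ℤ} (hn : 0 < n) (hsf : Squarefree n)
    (h : IsSquareModPrimeDivisors (-1) n) : ∃ u v : ℤ, n = u ^ 2 + v ^ 2 := by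
  lift n to ℕ using hn.le
  have hneg : IsSquare (-1 : ZMod n) := by
    refine (ZMod.isSquare_neg_one_iff_forall_mem_primeFactors_mod_four_ne_three
      (Int.squarefree_natCast.mp hsf)).mpr fun q hq => ?_
    have := Fact.mk (Nat.prime_of_mem_primeFactors hq)
    exact ZMod.exists_sq_eq_neg_one_iff.mp <| by
      simpa using h q this.out (Int.natCast_dvd_natCast.mpr (Nat.dvd_of_mem_primeFactors hq))
  obtain ⟨u, v, huv⟩ := Nat.eq_sq_add_sq_of_isSquare_mod_neg_one hneg
  exact ⟨u, v, by exact_mod_cast huv⟩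

namespace DiagIsotropic

variable {R : Type*} [CommRing R] {a b c : ℤ}

theorem rotate (h : DiagIsotropic R a b c) : DiagIsotropic R b c a := by
  obtain ⟨x, y, z, hne, h⟩ := h
  exact ⟨y, z, x, by tauto, by linear_combination h⟩

theorem neg (h : DiagIsotropic R a b c) : DiagIsotropic R (-a) (-b) (-c) := by
  obtain ⟨x, y, z, hne, h⟩ := h
  exact ⟨x, y, z, hne, by push_cast; linear_combination -h⟩

theorem map {S : Type*} [CommRing S] (f : R →+* S) (hf : Function.Injective f)
    (h : DiagIsotropic R a b c) : DiagIsotropic S a b c := by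
  obtain ⟨x, y, z, hne, h⟩ := h
  refine ⟨f x, f y, f z, by simpa [map_eq_zero_iff f hf] using hne, ?_⟩
  simpa using congrArg f h

theorem not_of_pos [LinearOrder R] [IsStrictOrderedRing R] (ha : 0 < a) (hb : 0 < b)
    (hc : 0 < c) : ¬DiagIsotropic R a b c := by
  rintro ⟨x, y, z, hne, h⟩
  have hx := mul_nonneg (Int.cast_pos.mpr ha).le (sq_nonneg x)
  have hy := mul_nonneg (Int.cast_pos.mpr hb).le (sq_nonneg y)
  have hz := mul_nonneg (Int.cast_pos.mpr hc).le (sq_nonneg z)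
  have hx0 : (a : R) * x ^ 2 = 0 := by linarith
  have hy0 : (b : R) * y ^ 2 = 0 := by linarith
  have hz0 : (c : R) * z ^ 2 = 0 := by linarith
  exact hne ⟨by simpa [ha.ne'] using hx0, by simpa [hb.ne'] using hy0, by simpa [hc.ne'] using hz0⟩

end DiagIsotropic

theorem diagIsotropic_rat_iff_int {a b c : ℤ} : DiagIsotropic ℚ a b c ↔ DiagIsotropic ℤ a b c := by
  refine ⟨fun ⟨x, y, z, hne, h⟩ => ?_, fun h => h.map (Int.castRingHom ℚ) Int.cast_injective⟩
  refine ⟨x.num * y.den * z.den, y.num * x.den * z.den, z.num * x.den * y.den, ?_, ?_⟩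
  · simpa [Rat.num_eq_zero] using hne
  · have key : ((a * (x.num * y.den * z.den) ^ 2 + b * (y.num * x.den * z.den) ^ 2
        + c * (z.num * x.den * y.den) ^ 2 : ℤ) : ℚ)
        = (x.den * y.den * z.den : ℚ) ^ 2 * (a * x ^ 2 + b * y ^ 2 + c * z ^ 2) := by
      push_cast
      rw [← Rat.mul_den_eq_num x, ← Rat.mul_den_eq_num y, ← Rat.mul_den_eq_num z]
      ring
    rw [h, mul_zero] at key
    simp only [Int.cast_id]
    exact_mod_cast key

theorem DiagIsotropic.exists_primitive {a b c : ℤ} (h : DiagIsotropic ℤ a b c) :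
    ∃ x y z : ℤ, (∀ d : ℤ, d ∣ x → d ∣ y → d ∣ z → IsUnit d) ∧
      a * x ^ 2 + b * y ^ 2 + c * z ^ 2 = 0 := by
  obtain ⟨x, y, z, hne, h⟩ := h
  simp only [Int.cast_id] at h
  set g := gcd x (gcd y z)
  have hg : g ≠ 0 := by simpa [g, gcd_eq_zero_iff] using hne
  obtain ⟨x', hx⟩ : g ∣ x := gcd_dvd_left _ _
  obtain ⟨y', hy⟩ : g ∣ y := (gcd_dvd_right _ _).trans (gcd_dvd_left _ _)
  obtain ⟨z', hz⟩ : g ∣ z := (gcd_dvd_right _ _).trans (gcd_dvd_right _ _)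
  refine ⟨x', y', z', fun d hdx hdy hdz => ?_, ?_⟩
  · have hgd : g * d ∣ g * 1 := by
      rw [mul_one]
      exact dvd_gcd (hx ▸ mul_dvd_mul_left g hdx)
        (dvd_gcd (hy ▸ mul_dvd_mul_left g hdy) (hz ▸ mul_dvd_mul_left g hdz))
    exact isUnit_of_dvd_one ((mul_dvd_mul_iff_left hg).mp hgd)
  · have : g ^ 2 * (a * x' ^ 2 + b * y' ^ 2 + c * z' ^ 2) = 0 := by
      rw [hx, hy, hz] at h
      linear_combination h
    exact (mul_eq_zero.mp this).resolve_left (pow_ne_zero 2 hg)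

section Legendre

variable {a b c : ℤ}

namespace LegendreConditions

theorem rotate (h : LegendreConditions a b c) : LegendreConditions b c a :=
  ⟨h.2.1, h.2.2, h.1⟩

theorem neg (h : LegendreConditions a b c) : LegendreConditions (-a) (-b) (-c) := by
  simpa only [LegendreConditions, isSquareModPrimeDivisors_neg_right, neg_mul_neg] using h

end LegendreConditions

theorem Prime.not_dvd_of_primitive {p x y z : ℤ} (hp : Prime p) (hsf : Squarefree (a * b * c))
    (hprim : ∀ d : ℤ, d ∣ x → d ∣ y → d ∣ z → IsUnit d)
    (h : a * x ^ 2 + b * y ^ 2 + c * z ^ 2 = 0) (hpa : p ∣ a) : ¬p ∣ z := by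
  intro hpz
  have hpby : p ∣ b * y ^ 2 := by
    rw [show b * y ^ 2 = -(a * x ^ 2) - c * z ^ 2 by linear_combination h]
    exact dvd_sub (dvd_neg.mpr (dvd_mul_of_dvd_left hpa _))
      (dvd_mul_of_dvd_right (dvd_pow hpz two_ne_zero) _)
  have hpb : ¬p ∣ b := fun hpb => (mul_assoc a b c ▸ hsf).not_dvd_right_of_dvd_left hp hpa
    (dvd_mul_of_dvd_left hpb c)
  have hpy : p ∣ y := hp.dvd_of_dvd_pow ((hp.dvd_or_dvd hpby).resolve_left hpb)
  obtain ⟨a', rfl⟩ := hpa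
  obtain ⟨y', rfl⟩ := hpy
  obtain ⟨z', rfl⟩ := hpz
  have hpa' : ¬p ∣ a' := fun ⟨a'', ha''⟩ =>
    hp.not_isUnit (hsf p ⟨a'' * b * c, by rw [ha'']; ring⟩)
  have hpax : p ∣ a' * x ^ 2 := by
    refine ⟨-(b * y' ^ 2 + c * z' ^ 2), mul_left_cancel₀ hp.ne_zero ?_⟩
    linear_combination h
  have hpx : p ∣ x := hp.dvd_of_dvd_pow ((hp.dvd_or_dvd hpax).resolve_left hpa')
  exact hp.not_isUnit (hprim p hpx (dvd_mul_right _ _) (dvd_mul_right _ _))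

theorem isSquareModPrimeDivisors_of_primitive {x y z : ℤ} (hsf : Squarefree (a * b * c))
    (hprim : ∀ d : ℤ, d ∣ x → d ∣ y → d ∣ z → IsUnit d)
    (h : a * x ^ 2 + b * y ^ 2 + c * z ^ 2 = 0) : IsSquareModPrimeDivisors (-(b * c)) a := by
  intro p hp hpa
  have := Fact.mk hp
  have hz : (z : ZMod p) ≠ 0 := by
    rw [Ne, ZMod.intCast_zmod_eq_zero_iff_dvd]
    exact (Nat.prime_iff_prime_int.mp hp).not_dvd_of_primitive hsf hprim h hpa
  have hmod := congrArg (Int.cast : ℤ → ZMod p) h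
  push_cast at hmod ⊢
  rw [(ZMod.intCast_zmod_eq_zero_iff_dvd a p).mpr hpa, zero_mul, zero_add] at hmod
  exact isSquare_neg_mul_of_add_sq_eq_zero hz hmod

theorem legendreConditions_of_diagIsotropic (hsf : Squarefree (a * b * c))
    (h : DiagIsotropic ℤ a b c) : LegendreConditions a b c := by
  obtain ⟨x, y, z, hprim, h⟩ := h.exists_primitive
  exact ⟨isSquareModPrimeDivisors_of_primitive hsf hprim h,
    isSquareModPrimeDivisors_of_primitive (mul_rotate a b c ▸ hsf)
      (fun d hy hz hx => hprim d hx hy hz) (by linear_combination h),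
    isSquareModPrimeDivisors_of_primitive (mul_rotate b c a ▸ mul_rotate a b c ▸ hsf)
      (fun d hz hx hy => hprim d hx hy hz) (by linear_combination h)⟩

theorem exists_linear_factor_mod_of_dvd {p : ℕ} (hp : p.Prime) (hsf : Squarefree (a * b * c))
    (hpa : (p : ℤ) ∣ a) (h : IsSquareModPrimeDivisors (-(b * c)) a) :
    ∃ α β γ : ZMod p, ∀ x y z : ZMod p,
      α * x + β * y + γ * z = 0 → (a : ZMod p) * x ^ 2 + b * y ^ 2 + c * z ^ 2 = 0 := by
  have := Fact.mk hp
  have hb : (b : ZMod p) ≠ 0 := by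
    rw [Ne, ZMod.intCast_zmod_eq_zero_iff_dvd]
    exact fun hpb => (mul_assoc a b c ▸ hsf).not_dvd_right_of_dvd_left
      (Nat.prime_iff_prime_int.mp hp) hpa (dvd_mul_of_dvd_left hpb c)
  have hbc := h p hp hpa
  push_cast at hbc
  obtain ⟨β, γ, H⟩ := exists_linear_factor_of_isSquare hb hbc
  refine ⟨0, β, γ, fun x y z hxyz => ?_⟩
  rw [(ZMod.intCast_zmod_eq_zero_iff_dvd a p).mpr hpa, zero_mul, zero_add]
  exact H y z (by simpa using hxyz)

theorem LegendreConditions.exists_linear_factor_mod (h : LegendreConditions a b c)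
    (hsf : Squarefree (a * b * c)) {p : ℕ} (hp : p.Prime) (hpd : (p : ℤ) ∣ a * b * c) :
    ∃ α β γ : ZMod p, ∀ x y z : ZMod p,
      α * x + β * y + γ * z = 0 → (a : ZMod p) * x ^ 2 + b * y ^ 2 + c * z ^ 2 = 0 := by
  have hp' : Prime (p : ℤ) := Nat.prime_iff_prime_int.mp hp
  rcases hp'.dvd_or_dvd hpd with hpab | hpc
  · rcases hp'.dvd_or_dvd hpab with hpa | hpb
    · exact exists_linear_factor_mod_of_dvd hp hsf hpa h.1
    · obtain ⟨α, β, γ, H⟩ :=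
        exists_linear_factor_mod_of_dvd hp (mul_rotate a b c ▸ hsf) hpb h.rotate.1
      exact ⟨γ, α, β, fun x y z hxyz => by
        linear_combination H y z x (by linear_combination hxyz)⟩
  · obtain ⟨α, β, γ, H⟩ := exists_linear_factor_mod_of_dvd hp
      (mul_rotate b c a ▸ mul_rotate a b c ▸ hsf) hpc h.rotate.rotate.1
    exact ⟨β, γ, α, fun x y z hxyz => by
      linear_combination H z x y (by linear_combination hxyz)⟩

theorem LegendreConditions.exists_small_zero_mod (h : LegendreConditions a b c)
    (hsf : Squarefree (a * b * c)) :
    ∃ x y z : ℤ, ¬(x = 0 ∧ y = 0 ∧ z = 0) ∧ x ^ 2 ≤ |b * c| ∧ y ^ 2 ≤ |c * a| ∧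
      z ^ 2 ≤ |a * b| ∧ a * b * c ∣ a * x ^ 2 + b * y ^ 2 + c * z ^ 2 := by
  set N := (a * b * c).natAbs
  have hN : Squarefree N := Int.squarefree_natAbs.mpr hsf
  have (p : N.primeFactors) : Fact (p : ℕ).Prime := ⟨Nat.prime_of_mem_primeFactors p.2⟩
  choose α β γ hαβγ using fun p : N.primeFactors => h.exists_linear_factor_mod hsf
    (Nat.prime_of_mem_primeFactors p.2) (Int.natCast_dvd.mpr (Nat.dvd_of_mem_primeFactors p.2))
  let f : ℤ × ℤ × ℤ →+ ∀ p : N.primeFactors, ZMod p :=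
    { toFun v p := α p * v.1 + β p * v.2.1 + γ p * v.2.2
      map_zero' := by ext; simp
      map_add' v w := by
        ext
        simp only [Prod.fst_add, Prod.snd_add, Pi.add_apply]
        push_cast
        ring }
  have hcard : Nat.card (∀ p : N.primeFactors, ZMod p) <
      ((b * c).natAbs.sqrt + 1) * ((c * a).natAbs.sqrt + 1) * ((a * b).natAbs.sqrt + 1) := by
    rw [Nat.card_pi_zmod_primeFactors hN]
    refine Nat.lt_mul_sqrt_succ_of_sq_eq ?_
    simp only [N, ← Int.natAbs_pow, ← Int.natAbs_mul]
    ring_nf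
  obtain ⟨x, y, z, hne, hf, hx, hy, hz⟩ := exists_ne_zero_map_eq_zero_of_card_lt f hcard
  refine ⟨x, y, z, hne, ?_, ?_, ?_, Int.dvd_of_squarefree_of_forall_prime_dvd hsf fun p hp => ?_⟩
  · simpa using Int.sq_le_of_abs_le_sqrt hx
  · simpa using Int.sq_le_of_abs_le_sqrt hy
  · simpa using Int.sq_le_of_abs_le_sqrt hz
  · rw [← ZMod.intCast_zmod_eq_zero_iff_dvd]
    push_cast
    exact hαβγ ⟨p, hp⟩ _ _ _ (congrFun hf ⟨p, hp⟩)

theorem diagIsotropic_one_one_of_neg (hc : c < 0) (hsf : Squarefree c)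
    (h : IsSquareModPrimeDivisors (-1) c) : DiagIsotropic ℤ 1 1 c := by
  obtain ⟨u, v, huv⟩ := Int.exists_sq_add_sq_of_squarefree (neg_pos.mpr hc)
    (Int.squarefree_neg.mpr hsf) (isSquareModPrimeDivisors_neg_right.mpr h)
  exact ⟨u, v, 1, by simp, by push_cast; linear_combination -huv⟩

theorem LegendreConditions.diagIsotropic_of_pos_of_pos_of_neg (h : LegendreConditions a b c)
    (hsf : Squarefree (a * b * c)) (ha : 0 < a) (hb : 0 < b) (hc : c < 0) :
    DiagIsotropic ℤ a b c := by
  by_cases hab : a * b = 1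
  · obtain ⟨rfl, rfl⟩ : a = 1 ∧ b = 1 :=
      ⟨Int.eq_one_of_mul_eq_one_right ha.le hab, Int.eq_one_of_mul_eq_one_left hb.le hab⟩
    exact diagIsotropic_one_one_of_neg hc (by simpa using hsf) (by simpa using h.2.2)
  obtain ⟨x, y, z, hne, hx, hy, hz, k, hk⟩ := h.exists_small_zero_mod hsf
  rw [abs_of_neg (mul_neg_of_pos_of_neg hb hc)] at hx
  rw [abs_of_neg (mul_neg_of_neg_of_pos hc ha)] at hy
  rw [abs_of_pos (mul_pos ha hb)] at hz
  have hsq (t : ℤ) (ht : t ^ 2 ∣ a * b * c) : t ^ 2 = 1 := Int.isUnit_sq (hsf t (sq t ▸ ht))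
  have hx' : 0 ≤ a * x ^ 2 ∧ a * x ^ 2 ≤ -(a * b * c) := ⟨by positivity, by nlinarith⟩
  have hy' : 0 ≤ b * y ^ 2 ∧ b * y ^ 2 ≤ -(a * b * c) := ⟨by positivity, by nlinarith⟩
  have hz' : c * z ^ 2 ≤ 0 ∧ a * b * c ≤ c * z ^ 2 := ⟨by nlinarith, by nlinarith⟩
  have habc : a * b * c < 0 := mul_neg_of_pos_of_neg (mul_pos ha hb) hc
  obtain ⟨hk₁, hk₂⟩ : -2 ≤ k ∧ k ≤ 1 := ⟨by nlinarith, by nlinarith⟩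
  interval_cases k
  · -- `k = -2`: then `x² = -bc` and `y² = -ca`
    have hx1 := hsq x ⟨-a, by nlinarith⟩
    have hy1 := hsq y ⟨-b, by nlinarith⟩
    exact absurd (by nlinarith) hab
  · -- `k = -1`: `a(xz - by)² + b(ax + yz)² = (z² + ab)(ax² + by²)`
    have hw : 0 < z ^ 2 + a * b := by positivity
    exact ⟨x * z - b * y, a * x + y * z, z ^ 2 + a * b, fun h => hw.ne' h.2.2,
      by push_cast; linear_combination (z ^ 2 + a * b) * hk⟩
  · exact ⟨x, y, z, hne, by simpa using hk⟩
  · -- `k = 1`: then `z² = ab`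
    have hz1 := hsq z ⟨c, by nlinarith⟩
    exact absurd (by nlinarith) hab

theorem LegendreConditions.diagIsotropic_of_sign (h : LegendreConditions a b c)
    (hsf : Squarefree (a * b * c)) (hs : (0 < a ∧ 0 < b ∧ c < 0) ∨ (a < 0 ∧ b < 0 ∧ 0 < c)) :
    DiagIsotropic ℤ a b c := by
  rcases hs with ⟨ha, hb, hc⟩ | ⟨ha, hb, hc⟩
  · exact h.diagIsotropic_of_pos_of_pos_of_neg hsf ha hb hc
  · have hsf' : Squarefree (-a * -b * -c) := by
      rw [show -a * -b * -c = -(a * b * c) by ring]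
      exact Int.squarefree_neg.mpr hsf
    simpa using (h.neg.diagIsotropic_of_pos_of_pos_of_neg hsf' (neg_pos.mpr ha) (neg_pos.mpr hb)
      (neg_neg_of_pos hc)).neg

theorem LegendreConditions.diagIsotropic (h : LegendreConditions a b c)
    (hsf : Squarefree (a * b * c)) (hpos : ¬(0 < a ∧ 0 < b ∧ 0 < c))
    (hneg : ¬(a < 0 ∧ b < 0 ∧ c < 0)) : DiagIsotropic ℤ a b c := by
  have hsf₁ : Squarefree (b * c * a) := mul_rotate a b c ▸ hsf
  have hsf₂ : Squarefree (c * a * b) := mul_rotate b c a ▸ hsf₁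
  have ha : a ≠ 0 := left_ne_zero_of_mul (left_ne_zero_of_mul hsf.ne_zero)
  have hb : b ≠ 0 := right_ne_zero_of_mul (left_ne_zero_of_mul hsf.ne_zero)
  have hc : c ≠ 0 := right_ne_zero_of_mul hsf.ne_zero
  rcases ha.lt_or_gt with ha | ha <;> rcases hb.lt_or_gt with hb | hb <;>
    rcases hc.lt_or_gt with hc | hc
  · exact absurd ⟨ha, hb, hc⟩ hneg
  · exact h.diagIsotropic_of_sign hsf (.inr ⟨ha, hb, hc⟩)
  · exact (h.rotate.rotate.diagIsotropic_of_sign hsf₂ (.inr ⟨hc, ha, hb⟩)).rotate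
  · exact (h.rotate.diagIsotropic_of_sign hsf₁ (.inl ⟨hb, hc, ha⟩)).rotate.rotate
  · exact (h.rotate.diagIsotropic_of_sign hsf₁ (.inr ⟨hb, hc, ha⟩)).rotate.rotate
  · exact (h.rotate.rotate.diagIsotropic_of_sign hsf₂ (.inl ⟨hc, ha, hb⟩)).rotate
  · exact h.diagIsotropic_of_sign hsf (.inl ⟨ha, hb, hc⟩)
  · exact absurd ⟨ha, hb, hc⟩ hpos

theorem diagIsotropic_int_iff (hsf : Squarefree (a * b * c)) :
    DiagIsotropic ℤ a b c ↔
      LegendreConditions a b c ∧ ¬(0 < a ∧ 0 < b ∧ 0 < c) ∧ ¬(a < 0 ∧ b < 0 ∧ c < 0) := by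
  refine ⟨fun h => ⟨legendreConditions_of_diagIsotropic hsf h, fun ⟨ha, hb, hc⟩ =>
    DiagIsotropic.not_of_pos ha hb hc h, fun ⟨ha, hb, hc⟩ => DiagIsotropic.not_of_pos
      (neg_pos.mpr ha) (neg_pos.mpr hb) (neg_pos.mpr hc) h.neg⟩,
    fun ⟨h, hpos, hneg⟩ => h.diagIsotropic hsf hpos hneg⟩

theorem legendreConditions_iff_jacobiSym (hsf : Squarefree (a * b * c)) :
    LegendreConditions a (-b) (-c) ↔
      (∀ p : ℕ, p.Prime → p ≠ 2 → (p : ℤ) ∣ a → jacobiSym (-(b * c)) p = 1) ∧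
      (∀ p : ℕ, p.Prime → p ≠ 2 → (p : ℤ) ∣ b → jacobiSym (a * c) p = 1) ∧
      (∀ p : ℕ, p.Prime → p ≠ 2 → (p : ℤ) ∣ c → jacobiSym (a * b) p = 1) := by
  rw [LegendreConditions, isSquareModPrimeDivisors_neg_right, isSquareModPrimeDivisors_neg_right,
    neg_mul_neg, show -(-c * a) = a * c by ring, show -(a * -b) = a * b by ring,
    isSquareModPrimeDivisors_iff_jacobiSym
      (by rw [mul_neg, ← mul_assoc]; exact Int.squarefree_neg.mpr hsf),
    isSquareModPrimeDivisors_iff_jacobiSym (by rwa [mul_left_comm, ← mul_assoc]),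
    isSquareModPrimeDivisors_iff_jacobiSym (by rwa [mul_comm])]

end Legendre

theorem conic_global_solubility_general (m1 m2 m3 : ℤ)
    (hpos : 0 < m1) (hsq : Squarefree (m1 * m2 * m3)) :
    Soluble ℚ m1 m2 m3 ↔
      ((∀ p : ℕ, p.Prime → p ≠ 2 → (p : ℤ) ∣ m1 → jacobiSym (-(m2 * m3)) p = 1) ∧
       (∀ p : ℕ, p.Prime → p ≠ 2 → (p : ℤ) ∣ m2 → jacobiSym (m1 * m3) p = 1) ∧
       (∀ p : ℕ, p.Prime → p ≠ 2 → (p : ℤ) ∣ m3 → jacobiSym (m1 * m2) p = 1) ∧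
       ¬(m2 < 0 ∧ m3 < 0) ∧
       Soluble ℚ_[2] m1 m2 m3) := by
  have key : Soluble ℚ m1 m2 m3 ↔ LegendreConditions m1 (-m2) (-m3) ∧ ¬(m2 < 0 ∧ m3 < 0) := by
    rw [soluble_iff_diagIsotropic (by exact_mod_cast hpos.ne'), diagIsotropic_rat_iff_int,
      diagIsotropic_int_iff (by simpa using hsq)]
    simp [hpos, hpos.not_gt]
  constructor
  · intro h
    obtain ⟨hL, hsign⟩ := key.mp h
    obtain ⟨h₁, h₂, h₃⟩ := (legendreConditions_iff_jacobiSym hsq).mp hL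
    exact ⟨h₁, h₂, h₃, hsign, h.map (Rat.castHom ℚ_[2])⟩
  · rintro ⟨h₁, h₂, h₃, hsign, -⟩
    exact key.mpr ⟨(legendreConditions_iff_jacobiSym hsq).mpr ⟨h₁, h₂, h₃⟩, hsign⟩

theorem conic_global_solubility (m1 m2 m3 : ℤ) (h1 : m1 ≠ 0) (h2 : m2 ≠ 0) (h3 : m3 ≠ 0)
    (hpos : 0 < m1) (hsq : Squarefree (m1 * m2 * m3)) :
    Soluble ℚ m1 m2 m3 ↔
      ((∀ p : ℕ, p.Prime → p ≠ 2 → (p : ℤ) ∣ m1 → jacobiSym (-(m2 * m3)) p = 1) ∧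
       (∀ p : ℕ, p.Prime → p ≠ 2 → (p : ℤ) ∣ m2 → jacobiSym (m1 * m3) p = 1) ∧
       (∀ p : ℕ, p.Prime → p ≠ 2 → (p : ℤ) ∣ m3 → jacobiSym (m1 * m2) p = 1) ∧
       ¬(m2 < 0 ∧ m3 < 0) ∧
       Soluble ℚ_[2] m1 m2 m3) :=
  conic_global_solubility_general m1 m2 m3 hpos hsq
end

section
/- Let m1, m2, m3 be nonzero integers with m1 > 0 and |m1·m2·m3| squarefree, and let p be an odd prime dividing m1. Then (m1, m2, m3) is ℚ_p-soluble, where ℚ_p is the field of p-adic numbers, if and only if the Legendre symbol (−m2·m3 / p) equals 1. -/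
open PadicInt IsLocalRing

theorem isSquare_neg_mul_of_mul_sq_add_mul_sq_eq_zero {F : Type*} [Field F] {α β B C : F}
    (hβ : β ≠ 0) (hBC : ¬(B = 0 ∧ C = 0)) (h : α * B ^ 2 + β * C ^ 2 = 0) :
    IsSquare (-(α * β)) := by
  have hB : B ≠ 0 := fun hB => hBC ⟨hB, by simpa [hB, hβ] using h⟩
  have hsq : -(α * β) * B ^ 2 = (β * C) ^ 2 := by linear_combination (-β) * h
  exact ⟨β * C / B, by rw [← sq, div_pow, eq_div_iff (pow_ne_zero 2 hB), hsq]⟩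

theorem soluble_of_isSquare_neg_mul {F : Type*} [Field F] {m1 m2 m3 : ℤ} (hm2 : (m2 : F) ≠ 0)
    (h : IsSquare ((-(m2 * m3) : ℤ) : F)) : Soluble F m1 m2 m3 := by
  obtain ⟨s, hs⟩ := h
  refine ⟨0, s, m2, fun h => hm2 h.2.2, ?_⟩
  push_cast at hs ⊢
  linear_combination (m1 * m2 : F) * hs

namespace PadicInt

variable {p : ℕ} [Fact p.Prime]

theorem mem_maximalIdeal_iff_toZMod_eq_zero {x : ℤ_[p]} :
    x ∈ maximalIdeal ℤ_[p] ↔ toZMod x = 0 := by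
  rw [← ker_toZMod, RingHom.mem_ker]

open Polynomial in
/-- Hensel's lemma: `X ^ 2 - c` has a simple root modulo `p` because `p` is odd. -/
theorem isSquare_of_isSquare_toZMod (hp : p ≠ 2) {c : ℤ_[p]} (hc : toZMod c ≠ 0)
    (h : IsSquare (toZMod c)) : IsSquare c := by
  obtain ⟨t, ht⟩ := h
  obtain ⟨a, rfl⟩ := ZMod.ringHom_surjective toZMod t
  have h2 : (2 : ZMod p) ≠ 0 := Ring.two_ne_zero (by rwa [ZMod.ringChar_zmod_n])
  have ha : toZMod a ≠ 0 := by rintro ha; simp [ha] at ht; exact hc ht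
  have hderiv_unit : IsUnit (2 * a) := by
    rw [← notMem_maximalIdeal, mem_maximalIdeal_iff_toZMod_eq_zero, map_mul, map_ofNat]
    exact mul_ne_zero h2 ha
  have hderiv : (X ^ 2 - C c).derivative.eval a = 2 * a := by simp [one_add_one_eq_two]
  obtain ⟨s, hs, -⟩ := HenselianRing.is_henselian (I := maximalIdeal ℤ_[p]) (X ^ 2 - C c)
    (monic_X_pow_sub_C c two_ne_zero) a
    (by rw [mem_maximalIdeal_iff_toZMod_eq_zero]; simp [ht, sq])
    (by rw [hderiv]; exact hderiv_unit.map _)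
  exact ⟨s, by simpa [sub_eq_zero, sq, eq_comm] using hs⟩

theorem toZMod_eq_zero_of_dvd {x : ℤ_[p]} (h : (p : ℤ_[p]) ∣ x) : toZMod x = 0 := by
  obtain ⟨y, rfl⟩ := h
  simp

theorem isSquare_neg_mul_toZMod_of_sq_eq {a b c α β γ : ℤ_[p]} (hβ : toZMod β ≠ 0)
    (hγ : toZMod γ ≠ 0) (hprim : ¬(toZMod a = 0 ∧ toZMod b = 0 ∧ toZMod c = 0))
    (h : a ^ 2 = p * γ * (α * b ^ 2 + β * c ^ 2)) :
    IsSquare (-(toZMod α * toZMod β)) := by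
  obtain ⟨a, rfl⟩ : (p : ℤ_[p]) ∣ a := prime_p.dvd_of_dvd_pow ⟨γ * (α * b ^ 2 + β * c ^ 2), by
    rw [h, mul_assoc]⟩
  have hdiv : γ * (α * b ^ 2 + β * c ^ 2) = p * a ^ 2 :=
    mul_left_cancel₀ prime_p.ne_zero (by linear_combination -h)
  have hmod := congrArg toZMod hdiv
  simp only [map_mul, map_add, map_pow, map_natCast, ZMod.natCast_self, zero_mul] at hmod
  refine isSquare_neg_mul_of_mul_sq_add_mul_sq_eq_zero hβ ?_ ((mul_eq_zero.mp hmod).resolve_left hγ)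
  exact fun hbc => hprim ⟨toZMod_eq_zero_of_dvd (dvd_mul_right _ _), hbc⟩

end PadicInt

theorem Soluble.exists_primitive_padicInt {p : ℕ} [Fact p.Prime] {m1 m2 m3 : ℤ}
    (h : Soluble ℚ_[p] m1 m2 m3) :
    ∃ a b c : ℤ_[p], ¬(toZMod a = 0 ∧ toZMod b = 0 ∧ toZMod c = 0) ∧
      a ^ 2 = ((m1 * m2 : ℤ) : ℤ_[p]) * b ^ 2 + ((m1 * m3 : ℤ) : ℤ_[p]) * c ^ 2 := by
  classical
  obtain ⟨x, y, z, hne, heq⟩ := h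
  obtain ⟨u, hu, hmax⟩ := ({x, y, z} : Finset ℚ_[p]).exists_max_image (‖·‖) (by simp)
  have hu0 : u ≠ 0 := by
    rintro rfl
    simp only [Finset.mem_insert, Finset.mem_singleton, norm_zero, forall_eq_or_imp,
      forall_eq, norm_le_zero_iff] at hmax
    exact hne hmax
  have hint : ∀ v ∈ ({x, y, z} : Finset ℚ_[p]), ‖v / u‖ ≤ 1 := fun v hv => by
    rw [norm_div]; exact div_le_one_of_le₀ (hmax v hv) (norm_nonneg _)
  have hself (hu' : ‖u / u‖ ≤ 1) : toZMod (⟨u / u, hu'⟩ : ℤ_[p]) ≠ 0 := by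
    rw [show (⟨u / u, hu'⟩ : ℤ_[p]) = (1 : ℤ_[p]) from Subtype.ext (div_self hu0)]
    simp
  refine ⟨⟨x / u, hint x (by simp)⟩, ⟨y / u, hint y (by simp)⟩, ⟨z / u, hint z (by simp)⟩,
    ?_, ?_⟩
  · simp only [Finset.mem_insert, Finset.mem_singleton] at hu
    rcases hu with rfl | rfl | rfl
    exacts [fun h => hself _ h.1, fun h => hself _ h.2.1, fun h => hself _ h.2.2]
  · apply Subtype.coe_injective
    show (x / u) ^ 2 =
      ((m1 * m2 : ℤ) : ℚ_[p]) * (y / u) ^ 2 + ((m1 * m3 : ℤ) : ℚ_[p]) * (z / u) ^ 2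
    field_simp
    linear_combination heq

theorem conic_local_solubility_p_dvd_m1_general (m1 m2 m3 : ℤ) (h2 : m2 ≠ 0)
    (hsq : Squarefree (m1 * m2 * m3))
    (p : ℕ) [Fact p.Prime] (hodd : p ≠ 2) (hdvd : (p : ℤ) ∣ m1) :
    Soluble ℚ_[p] m1 m2 m3 ↔ jacobiSym (-(m2 * m3)) p = 1 := by
  obtain ⟨w, rfl⟩ := hdvd
  have hcoprime : ((w * (m2 * m3) : ℤ) : ZMod p) ≠ 0 := by
    rw [Ne, ZMod.intCast_zmod_eq_zero_iff_dvd]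
    refine fun hp => (Nat.prime_iff_prime_int.mp Fact.out).not_isUnit (hsq p ?_)
    exact (mul_dvd_mul_left (p : ℤ) hp).trans (dvd_of_eq (by ring))
  obtain ⟨hw, hm2, hm3⟩ : (w : ZMod p) ≠ 0 ∧ (m2 : ZMod p) ≠ 0 ∧ (m3 : ZMod p) ≠ 0 := by
    simpa only [Int.cast_mul, mul_ne_zero_iff] using hcoprime
  rw [← jacobiSym.legendreSym.to_jacobiSym,
    legendreSym.eq_one_iff p (by push_cast; simp [hm2, hm3])]
  constructor
  · intro hs
    obtain ⟨a, b, c, hprim, heq⟩ := hs.exists_primitive_padicInt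
    have := isSquare_neg_mul_toZMod_of_sq_eq (α := m2) (β := m3) (γ := w) (by simpa) (by simpa)
      hprim (by rw [heq]; push_cast; ring)
    simpa using this
  · intro hsquare
    refine soluble_of_isSquare_neg_mul (by exact_mod_cast h2) ?_
    have := isSquare_of_isSquare_toZMod hodd (c := ((-(m2 * m3) : ℤ) : ℤ_[p]))
      (by simp [hm2, hm3]) (by simpa using hsquare)
    exact_mod_cast this.map PadicInt.Coe.ringHom

theorem conic_local_solubility_p_dvd_m1 (m1 m2 m3 : ℤ) (h1 : m1 ≠ 0) (h2 : m2 ≠ 0)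
    (h3 : m3 ≠ 0) (hpos : 0 < m1) (hsq : Squarefree (m1 * m2 * m3))
    (p : ℕ) [Fact p.Prime] (hodd : p ≠ 2) (hdvd : (p : ℤ) ∣ m1) :
    Soluble ℚ_[p] m1 m2 m3 ↔ jacobiSym (-(m2 * m3)) p = 1 :=
  conic_local_solubility_p_dvd_m1_general m1 m2 m3 h2 hsq p hodd hdvd
end

section
/- Let m1, m2, m3 be nonzero integers with m1 > 0 and |m1·m2·m3| squarefree, and let p be an odd prime dividing m2. Then (m1, m2, m3) is ℚ_p-soluble, where ℚ_p is the field of p-adic numbers, if and only if the Legendre symbol (m1·m3 / p) equals 1. -/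
/-!
Write `m₂ = p k`. Over `ℤ_p` the conic reads `x² = p (m₁k) y² + (m₁m₃) z²` with `m₁k` and `m₁m₃`
units, by squarefreeness. Scale a solution to be primitive and reduce mod `p`: then
`x² ≡ m₁m₃ z²`, so `m₁m₃` is a square mod `p` unless `p ∣ z`; but `p ∣ z` forces `p ∣ x`, and then
`p² ∣ p (m₁k) y²` forces `p ∣ y`, contradicting primitivity. Conversely, if `m₁m₃` is a square
mod `p`, Hensel's lemma (`p` odd) makes it a square in `ℤ_p`, and `(√(m₁m₃), 0, 1)` is a solution.
-/

def ConicSoluble (F : Type*) [Field F] (A B : F) : Prop :=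
  ∃ x y z : F, ¬(x = 0 ∧ y = 0 ∧ z = 0) ∧ x ^ 2 = A * y ^ 2 + B * z ^ 2

theorem soluble_iff_conicSoluble (F : Type*) [Field F] (m1 m2 m3 : ℤ) :
    Soluble F m1 m2 m3 ↔ ConicSoluble F ((m1 * m2 : ℤ) : F) ((m1 * m3 : ℤ) : F) :=
  Iff.rfl

theorem ConicSoluble.of_isSquare {F : Type*} [Field F] (A : F) {B : F} (hB : IsSquare B) :
    ConicSoluble F A B := by
  obtain ⟨r, rfl⟩ := hB
  exact ⟨r, 0, 1, by simp, by ring⟩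

namespace PadicInt

variable {p : ℕ} [Fact p.Prime]

open Polynomial

theorem toZMod_eq_zero_iff_norm_lt_one (x : ℤ_[p]) : toZMod x = 0 ↔ ‖x‖ < 1 := by
  rw [← RingHom.mem_ker, ker_toZMod, IsLocalRing.mem_maximalIdeal, mem_nonunits_iff,
    not_isUnit_iff]

theorem toZMod_ne_zero_iff_norm_eq_one (x : ℤ_[p]) : toZMod x ≠ 0 ↔ ‖x‖ = 1 := by
  rw [Ne, toZMod_eq_zero_iff_norm_lt_one, not_lt]
  exact ⟨(norm_le_one x).antisymm, ge_of_eq⟩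

/-- Dividing by the coordinate of largest norm. -/
theorem exists_primitive_solution {A B : ℤ_[p]} (h : ConicSoluble ℚ_[p] A B) :
    ∃ a b c : ℤ_[p], ¬(toZMod a = 0 ∧ toZMod b = 0 ∧ toZMod c = 0) ∧
      a ^ 2 = A * b ^ 2 + B * c ^ 2 := by
  classical
  obtain ⟨x, y, z, hxyz, heq⟩ := h
  obtain ⟨t, ht, hmax⟩ := Finset.exists_max_image {x, y, z} (‖·‖) (Finset.insert_nonempty _ _)
  simp only [Finset.mem_insert, Finset.mem_singleton, forall_eq_or_imp, forall_eq] at ht hmax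
  obtain ⟨hx, hy, hz⟩ := hmax
  have ht0 : t ≠ 0 := by
    rintro rfl
    simp only [norm_zero, norm_le_zero_iff] at hx hy hz
    exact hxyz ⟨hx, hy, hz⟩
  have hscale : ∀ u : ℚ_[p], ‖u‖ ≤ ‖t‖ → ∃ a : ℤ_[p], (a : ℚ_[p]) = u / t := fun u hu =>
    ⟨⟨u / t, by rw [norm_div]; exact div_le_one_of_le₀ hu (norm_nonneg t)⟩, rfl⟩
  obtain ⟨a, ha⟩ := hscale x hx
  obtain ⟨b, hb⟩ := hscale y hy
  obtain ⟨c, hc⟩ := hscale z hz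
  refine ⟨a, b, c, ?_, ext ?_⟩
  · simp only [toZMod_eq_zero_iff_norm_lt_one, norm_def, ha, hb, hc]
    rintro ⟨hx', hy', hz'⟩
    have : ‖t / t‖ < 1 := by rcases ht with rfl | rfl | rfl <;> assumption
    simp [ht0] at this
  · push_cast [ha, hb, hc]
    field_simp
    linear_combination heq

theorem isSquare_toZMod_of_primitive_solution {w B a b c : ℤ_[p]} (hw : toZMod w ≠ 0)
    (hprim : ¬(toZMod a = 0 ∧ toZMod b = 0 ∧ toZMod c = 0))
    (h : a ^ 2 = p * w * b ^ 2 + B * c ^ 2) : IsSquare (toZMod B) := by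
  have hred : toZMod a ^ 2 = toZMod B * toZMod c ^ 2 := by
    simpa using congrArg toZMod h
  by_cases hc : toZMod c = 0
  · exfalso
    have ha : toZMod a = 0 := by simpa [hc] using hred
    obtain ⟨a', rfl⟩ := (norm_lt_one_iff_dvd a).mp ((toZMod_eq_zero_iff_norm_lt_one a).mp ha)
    obtain ⟨c', rfl⟩ := (norm_lt_one_iff_dvd c).mp ((toZMod_eq_zero_iff_norm_lt_one c).mp hc)
    have hdesc : w * b ^ 2 = p * (a' ^ 2 - B * c' ^ 2) := by
      have hp : (p : ℤ_[p]) ≠ 0 := Nat.cast_ne_zero.mpr (Fact.out : p.Prime).ne_zero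
      apply mul_left_cancel₀ hp
      linear_combination -h
    have hb : toZMod b = 0 := by simpa [hw] using congrArg toZMod hdesc
    exact hprim ⟨ha, hb, hc⟩
  · exact ⟨toZMod a / toZMod c, by field_simp; exact hred.symm⟩

theorem isSquare_of_isSquare_toZMod_s9 (hp : p ≠ 2) {B : ℤ_[p]} (hB : toZMod B ≠ 0)
    (hsq : IsSquare (toZMod B)) : IsSquare B := by
  obtain ⟨s, hs⟩ := hsq
  obtain ⟨a, rfl⟩ := ZMod.ringHom_surjective toZMod s
  have ha : toZMod a ≠ 0 := fun h => hB (by rw [hs, h, mul_zero])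
  have h2 : (2 : ZMod p) ≠ 0 := Ring.two_ne_zero (by rwa [ZMod.ringChar_zmod_n])
  let F : ℤ_[p][X] := X ^ 2 - C B
  have hFa : ‖F.aeval a‖ < 1 := by
    rw [← toZMod_eq_zero_iff_norm_lt_one]
    simp [F, hs, sq]
  have hF'a : ‖F.derivative.aeval a‖ = 1 := by
    rw [← toZMod_ne_zero_iff_norm_eq_one]
    simpa [F, ha, one_add_one_eq_two, map_ofNat] using h2
  obtain ⟨b, hb, -⟩ := hensels_lemma (F := F) (a := a) (by rwa [hF'a, one_pow])
  refine ⟨b, ?_⟩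
  rw [coe_aeval_eq_eval, eval_sub, eval_pow, eval_X, eval_C, sub_eq_zero] at hb
  rw [← hb, sq]

theorem conicSoluble_iff_isSquare_toZMod (hp : p ≠ 2) {w B : ℤ_[p]} (hw : toZMod w ≠ 0)
    (hB : toZMod B ≠ 0) :
    ConicSoluble ℚ_[p] ((p * w : ℤ_[p]) : ℚ_[p]) B ↔ IsSquare (toZMod B) := by
  constructor
  · intro h
    obtain ⟨a, b, c, hprim, heq⟩ := exists_primitive_solution h
    exact isSquare_toZMod_of_primitive_solution hw hprim heq
  · intro h
    exact ConicSoluble.of_isSquare _ ((isSquare_of_isSquare_toZMod_s9 hp hB h).map Coe.ringHom)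

end PadicInt

theorem conic_local_solubility_p_dvd_m2_general (m1 m2 m3 : ℤ) (hsq : Squarefree (m1 * m2 * m3))
    (p : ℕ) [Fact p.Prime] (hodd : p ≠ 2) (hdvd : (p : ℤ) ∣ m2) :
    Soluble ℚ_[p] m1 m2 m3 ↔ jacobiSym (m1 * m3) p = 1 := by
  obtain ⟨k, rfl⟩ := hdvd
  have hndvd : ¬(p : ℤ) ∣ k * (m1 * m3) := by
    rw [show m1 * (p * k) * m3 = p * (k * (m1 * m3)) by ring] at hsq
    exact fun h => (Nat.prime_iff_prime_int.mp Fact.out).not_isUnit (hsq p (mul_dvd_mul_left _ h))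
  have hunit : ∀ n : ℤ, n ∣ k * (m1 * m3) → PadicInt.toZMod (n : ℤ_[p]) ≠ 0 := fun n hn => by
    rw [map_intCast, Ne, ZMod.intCast_zmod_eq_zero_iff_dvd]
    exact fun h => hndvd (h.trans hn)
  have hB := hunit (m1 * m3) (dvd_mul_left _ _)
  rw [soluble_iff_conicSoluble, ← jacobiSym.legendreSym.to_jacobiSym,
    legendreSym.eq_one_iff p (by rwa [map_intCast] at hB), ← map_intCast PadicInt.toZMod,
    ← PadicInt.conicSoluble_iff_isSquare_toZMod hodd (hunit (m1 * k) ⟨m3, by ring⟩) hB]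
  push_cast
  rw [mul_left_comm]

theorem conic_local_solubility_p_dvd_m2 (m1 m2 m3 : ℤ) (h1 : m1 ≠ 0) (h2 : m2 ≠ 0)
    (h3 : m3 ≠ 0) (hpos : 0 < m1) (hsq : Squarefree (m1 * m2 * m3))
    (p : ℕ) [Fact p.Prime] (hodd : p ≠ 2) (hdvd : (p : ℤ) ∣ m2) :
    Soluble ℚ_[p] m1 m2 m3 ↔ jacobiSym (m1 * m3) p = 1 :=
  conic_local_solubility_p_dvd_m2_general m1 m2 m3 hsq p hodd hdvd
end

section
/- Let m1, m2, m3 be nonzero integers and let p be an odd prime with p ∤ m1·m2·m3. Then (m1, m2, m3) is ℚ_p-soluble, where ℚ_p is the field of p-adic numbers. -/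
/-!
Reducing mod `p`, the coefficients `a = m₁m₂` and `b = m₁m₃` become nonzero in `𝔽_p`, and
counting shows that `a y² + b z² = 1` has a solution there (the sets `{a y²}` and `{1 - b z²}`
each have `(p + 1) / 2` elements). Lifting `y, z` to `ℤ_p`, the value `u = a y² + b z²` is
`≡ 1 mod p`, hence a square `x²` by Hensel's lemma, since `p` is odd; `x ≠ 0` because `u` is a
unit.
-/

open Polynomial

theorem FiniteField.exists_mul_sq_add_mul_sq_eq_one {F : Type*} [Field F] [Fintype F]
    (hF : ringChar F ≠ 2) {a b : F} (ha : a ≠ 0) (hb : b ≠ 0) :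
    ∃ y z : F, a * y ^ 2 + b * z ^ 2 = 1 := by
  obtain ⟨y, z, hyz⟩ := exists_root_sum_quadratic (degree_quadratic (b := 0) (c := -1) ha)
    (degree_quadratic (b := 0) (c := 0) hb) (odd_card_of_char_ne_two hF)
  refine ⟨y, z, ?_⟩
  simp only [eval_add, eval_mul, eval_pow, eval_C, eval_X] at hyz
  linear_combination hyz

namespace PadicInt

variable {p : ℕ} [Fact p.Prime]

theorem norm_lt_one_iff_toZMod_eq_zero {x : ℤ_[p]} : ‖x‖ < 1 ↔ toZMod x = 0 := by
  rw [← mem_nonunits, ← RingHom.mem_ker, ker_toZMod]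
  rfl

theorem norm_eq_one_iff_toZMod_ne_zero {x : ℤ_[p]} : ‖x‖ = 1 ↔ toZMod x ≠ 0 := by
  rw [Ne, ← norm_lt_one_iff_toZMod_eq_zero, not_lt]
  exact ⟨ge_of_eq, (norm_le_one x).antisymm⟩

theorem isSquare_of_isSquare_toZMod_s11 (hp : p ≠ 2) {u : ℤ_[p]} (hu : IsSquare (toZMod u))
    (hu0 : toZMod u ≠ 0) : IsSquare u := by
  obtain ⟨t, ht⟩ := hu
  obtain ⟨a, rfl⟩ := ZMod.ringHom_surjective (toZMod (p := p)) t
  have h2 : (2 : ZMod p) ≠ 0 := Ring.two_ne_zero (by rwa [ZMod.ringChar_zmod_n])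
  have ha : toZMod a ≠ 0 := by
    intro h
    exact hu0 (by rw [ht, h, mul_zero])
  have hval : ‖a ^ 2 - u‖ < 1 := norm_lt_one_iff_toZMod_eq_zero.mpr (by simp [ht, sq])
  have hder : ‖2 * a‖ = 1 :=
    norm_eq_one_iff_toZMod_ne_zero.mpr (by rw [map_mul, map_ofNat]; exact mul_ne_zero h2 ha)
  have hF : ‖(X ^ 2 - C u).eval a‖ < ‖(X ^ 2 - C u).derivative.eval a‖ ^ 2 := by
    have hderiv : (X ^ 2 - C u).derivative.eval a = 2 * a := by simp; norm_num
    rw [hderiv, hder, one_pow]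
    simpa using hval
  obtain ⟨x, hx, -⟩ := hensels_lemma hF
  refine ⟨x, ?_⟩
  simp only [map_sub, aeval_X_pow, aeval_C, Algebra.algebraMap_self, RingHom.id_apply,
    sub_eq_zero] at hx
  rw [← hx, sq]

end PadicInt

theorem conic_local_solubility_unramified_general (m1 m2 m3 : ℤ) (p : ℕ) [Fact p.Prime] (hodd : p ≠ 2)
    (hndvd : ¬((p : ℤ) ∣ m1 * m2 * m3)) :
    Soluble ℚ_[p] m1 m2 m3 := by
  have ha : ((m1 * m2 : ℤ) : ZMod p) ≠ 0 := by
    rw [Ne, ZMod.intCast_zmod_eq_zero_iff_dvd]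
    exact fun h => hndvd (h.mul_right m3)
  have hb : ((m1 * m3 : ℤ) : ZMod p) ≠ 0 := by
    rw [Ne, ZMod.intCast_zmod_eq_zero_iff_dvd]
    exact fun h => hndvd (mul_right_comm m1 m2 m3 ▸ h.mul_right m2)
  obtain ⟨y, z, hyz⟩ :=
    FiniteField.exists_mul_sq_add_mul_sq_eq_one (by rwa [ZMod.ringChar_zmod_n]) ha hb
  obtain ⟨y, rfl⟩ := ZMod.ringHom_surjective PadicInt.toZMod y
  obtain ⟨z, rfl⟩ := ZMod.ringHom_surjective PadicInt.toZMod z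
  set u : ℤ_[p] := ((m1 * m2 : ℤ) : ℤ_[p]) * y ^ 2 + ((m1 * m3 : ℤ) : ℤ_[p]) * z ^ 2
  have hu : PadicInt.toZMod u = 1 := by simpa [u] using hyz
  obtain ⟨x, hx⟩ :=
    PadicInt.isSquare_of_isSquare_toZMod_s11 hodd (hu ▸ IsSquare.one) (hu ▸ one_ne_zero)
  refine ⟨x, y, z, fun ⟨hx0, _⟩ => ?_, ?_⟩
  · rw [PadicInt.coe_eq_zero] at hx0
    simp [hx, hx0] at hu
  · have := congrArg ((↑) : ℤ_[p] → ℚ_[p]) hx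
    push_cast [u] at this ⊢
    rw [sq, ← this]

theorem conic_local_solubility_unramified (m1 m2 m3 : ℤ) (h1 : m1 ≠ 0) (h2 : m2 ≠ 0)
    (h3 : m3 ≠ 0) (p : ℕ) [Fact p.Prime] (hodd : p ≠ 2) (hndvd : ¬((p : ℤ) ∣ m1 * m2 * m3)) :
    Soluble ℚ_[p] m1 m2 m3 :=
  conic_local_solubility_unramified_general m1 m2 m3 p hodd hndvd
end

section
/- One has the identity of convergent infinite products: 1728 · (3/16)^3 · c(1)^3 · (∏_{p prime, p > 2} (1 − 3/(p+2)^2 + 2/(p+2)^3)) · (∏_{p prime, p > 2} (1 − 1/p^2)) = (27/8) · ∏_{p prime, p > 2} (1 − 1/p)^4 · (1 + 4/p). -/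
open Finset

/-- `c(r) = (∏_{p ∣ r} (p+1)/(p+2)) · ∏_p (1 - 2/(p(p+1)))`. -/
noncomputable def cconst (r : ℕ) : ℝ :=
  (∏ p ∈ r.primeFactors, (((p : ℝ) + 1) / ((p : ℝ) + 2))) *
    ∏' p : Nat.Primes, (1 - 2 / (((p : ℕ) : ℝ) * (((p : ℕ) : ℝ) + 1)))

/-! All four products are Euler products whose local factors satisfy
`(1 - 2/(p(p+1)))³ (1 - 3/(p+2)² + 2/(p+2)³) (1 - 1/p²) = (1 - 1/p)⁴ (1 + 4/p)`, each factor being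
`1 + O(1/p²)`, so the identity follows by multiplying the products termwise; the Euler factor
`2/3` of `c(1)` at `p = 2` supplies the constant `1728 (3/16)³ (2/3)³ = 27/8`. -/

theorem local_factor_identity {x : ℝ} (hx : x ≠ 0) (hx1 : x + 1 ≠ 0) (hx2 : x + 2 ≠ 0) :
    (1 - 2 / (x * (x + 1))) ^ 3 * (1 - 3 / (x + 2) ^ 2 + 2 / (x + 2) ^ 3) * (1 - 1 / x ^ 2) =
      (1 - 1 / x) ^ 4 * (1 + 4 / x) := by
  field_simp
  ring

theorem multipliable_of_abs_sub_one_le {P : ℕ → Prop} (f : ℝ → ℝ) {C : ℝ}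
    (hf : ∀ n, P n → |f n - 1| ≤ C / (n : ℝ) ^ 2) :
    Multipliable fun n : Subtype P => f n := by
  have hC : Summable fun n : Subtype P => C / ((n : ℕ) : ℝ) ^ 2 := by
    simpa only [Function.comp_def, mul_one_div] using
      ((Real.summable_one_div_nat_pow.mpr one_lt_two).mul_left C).subtype P
  have hsub : Summable fun n : Subtype P => f n - 1 :=
    hC.of_norm_bounded fun n => hf n n.2
  exact (Real.multipliable_one_add_of_summable hsub).congr fun n => add_sub_cancel _ _

theorem abs_one_sub_two_div_mul_sub_one_le {x : ℝ} (hx : 0 < x) :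
    |1 - 2 / (x * (x + 1)) - 1| ≤ 2 / x ^ 2 := by
  rw [sub_sub_cancel_left, abs_neg, abs_of_pos (by positivity)]
  gcongr
  nlinarith

theorem abs_one_sub_three_div_add_two_div_sub_one_le {x : ℝ} (hx : 0 < x) :
    |1 - 3 / (x + 2) ^ 2 + 2 / (x + 2) ^ 3 - 1| ≤ 3 / x ^ 2 := by
  have hsmall : 2 / (x + 2) ^ 3 < 3 / (x + 2) ^ 2 := by
    rw [div_lt_div_iff₀ (by positivity) (by positivity)]
    nlinarith [pow_pos (by linarith : (0 : ℝ) < x + 2) 2]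
  have hle : 3 / (x + 2) ^ 2 ≤ 3 / x ^ 2 := by gcongr; linarith
  have hpos : 0 < 2 / (x + 2) ^ 3 := by positivity
  rw [abs_le]
  constructor <;> linarith

theorem abs_one_sub_one_div_sq_sub_one_le (x : ℝ) : |1 - 1 / x ^ 2 - 1| ≤ 1 / x ^ 2 := by
  rw [sub_sub_cancel_left, abs_neg, abs_of_nonneg (by positivity)]

theorem tprod_primes_eq_mul_tprod_odd_primes {α : Type*} [CommMonoid α] [TopologicalSpace α]
    [ContinuousMul α] [T2Space α] {f : ℕ → α}
    (hf : Multipliable fun p : {p : ℕ // p.Prime ∧ 2 < p} => f p) :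
    ∏' p : Nat.Primes, f p = f 2 * ∏' p : {p : ℕ // p.Prime ∧ 2 < p}, f p := by
  have hsplit : {p : ℕ | p.Prime} = {2} ∪ {p | p.Prime ∧ 2 < p} := by
    ext p
    simp only [Set.mem_ofPred_eq, Set.mem_union, Set.mem_singleton_iff]
    constructor
    · intro hp
      rcases hp.two_le.lt_or_eq with h | h
      exacts [Or.inr ⟨hp, h⟩, Or.inl h.symm]
    · rintro (rfl | ⟨hp, -⟩)
      exacts [Nat.prime_two, hp]
  have hdisj : Disjoint ({2} : Set ℕ) {p | p.Prime ∧ 2 < p} := by simp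
  calc ∏' p : Nat.Primes, f p = ∏' p : ↥({2} ∪ {p | p.Prime ∧ 2 < p} : Set ℕ), f p :=
        tprod_congr_set_coe f hsplit
    _ = (∏' p : ({2} : Set ℕ), f p) * ∏' p : {p : ℕ // p.Prime ∧ 2 < p}, f p :=
        Multipliable.tprod_union_disjoint hdisj ((Set.finite_singleton 2).multipliable f) hf
    _ = f 2 * ∏' p : {p : ℕ // p.Prime ∧ 2 < p}, f p := by rw [tprod_singleton]

theorem multipliable_one_sub_two_div_mul_add_one :
    Multipliable fun p : {p : ℕ // p.Prime ∧ 2 < p} =>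
      1 - 2 / (((p : ℕ) : ℝ) * (((p : ℕ) : ℝ) + 1)) :=
  multipliable_of_abs_sub_one_le (fun x => 1 - 2 / (x * (x + 1)))
    fun n hn => abs_one_sub_two_div_mul_sub_one_le (by exact_mod_cast hn.1.pos)

theorem cconst_one :
    cconst 1 = 2 / 3 * ∏' p : {p : ℕ // p.Prime ∧ 2 < p},
      (1 - 2 / (((p : ℕ) : ℝ) * (((p : ℕ) : ℝ) + 1))) := by
  rw [cconst, Nat.primeFactors_one, Finset.prod_empty, one_mul,
    tprod_primes_eq_mul_tprod_odd_primes (f := fun n : ℕ => 1 - 2 / ((n : ℝ) * ((n : ℝ) + 1)))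
      multipliable_one_sub_two_div_mul_add_one]
  norm_num

theorem leading_constant_identity :
    1728 * (3 / 16 : ℝ) ^ 3 * cconst 1 ^ 3 *
        (∏' p : {p : ℕ // p.Prime ∧ 2 < p},
          (1 - 3 / (((p : ℕ) : ℝ) + 2) ^ 2 + 2 / (((p : ℕ) : ℝ) + 2) ^ 3)) *
        (∏' p : {p : ℕ // p.Prime ∧ 2 < p}, (1 - 1 / ((p : ℕ) : ℝ) ^ 2)) =
      27 / 8 * ∏' p : {p : ℕ // p.Prime ∧ 2 < p},
        ((1 - 1 / ((p : ℕ) : ℝ)) ^ 4 * (1 + 4 / ((p : ℕ) : ℝ))) := by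
  have hF := multipliable_one_sub_two_div_mul_add_one
  have hA : Multipliable fun p : {p : ℕ // p.Prime ∧ 2 < p} =>
      1 - 3 / (((p : ℕ) : ℝ) + 2) ^ 2 + 2 / (((p : ℕ) : ℝ) + 2) ^ 3 :=
    multipliable_of_abs_sub_one_le (fun x => 1 - 3 / (x + 2) ^ 2 + 2 / (x + 2) ^ 3)
      fun n hn => abs_one_sub_three_div_add_two_div_sub_one_le (by exact_mod_cast hn.1.pos)
  have hB : Multipliable fun p : {p : ℕ // p.Prime ∧ 2 < p} => 1 - 1 / ((p : ℕ) : ℝ) ^ 2 :=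
    multipliable_of_abs_sub_one_le (fun x => 1 - 1 / x ^ 2)
      fun n _ => abs_one_sub_one_div_sq_sub_one_le n
  have hlocal : (∏' p : {p : ℕ // p.Prime ∧ 2 < p},
      ((1 - 1 / ((p : ℕ) : ℝ)) ^ 4 * (1 + 4 / ((p : ℕ) : ℝ)))) =
      (∏' p : {p : ℕ // p.Prime ∧ 2 < p}, (1 - 2 / (((p : ℕ) : ℝ) * (((p : ℕ) : ℝ) + 1)))) ^ 3 *
        (∏' p : {p : ℕ // p.Prime ∧ 2 < p},
          (1 - 3 / (((p : ℕ) : ℝ) + 2) ^ 2 + 2 / (((p : ℕ) : ℝ) + 2) ^ 3)) *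
        (∏' p : {p : ℕ // p.Prime ∧ 2 < p}, (1 - 1 / ((p : ℕ) : ℝ) ^ 2)) := by
    rw [← hF.tprod_pow, ← (hF.pow 3).tprod_mul hA, ← ((hF.pow 3).mul hA).tprod_mul hB]
    refine tprod_congr fun p => ?_
    have hp : (0 : ℝ) < (p : ℕ) := by exact_mod_cast p.2.1.pos
    exact (local_factor_identity hp.ne' (by positivity) (by positivity)).symm
  rw [hlocal, cconst_one]
  ring
end
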